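/- arXiv:2405.10021 — 8 statements merged into one kernel-verified Lean document; each statement's English description precedes it below -/
import Mathlib

section
/- Let p be a prime, P a finite p-group, H a finite p'-group acting on P, and G := P ⋊ H. Then ⁅P,H⁆ = P ∩ O^p(G); that is, ⁅P,H⁆ is the p-hyperfocal subgroup of G (note that P is a Sylow p-subgroup of G). -/
open scoped Pointwise


/-- `O^p(G)`: the smallest normal subgroup of `G` whose quotient is a `p`-group
(for a finite group `G`, equivalently, a normal subgroup of `p`-power index). -/
def pResidual (p : ℕ) (G : Type*) [Group G] : Subgroup G :=
  sInf {N : Subgroup G | N.Normal ∧ ∃ n : ℕ, N.index = p ^ n}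

/-- Let `p` be a prime, `P` a finite `p`-group, `H` a finite `p'`-group acting on `P`, and
`G := P ⋊ H`. Then `⁅P, H⁆ = P ∩ O^p(G)`; that is, `⁅P, H⁆` is the `p`-hyperfocal subgroup
of `G` (here `P` and `H` are identified with subgroups of `G`, and `P` is a Sylow
`p`-subgroup of `G`). -/
theorem stmt7 (p : ℕ) [Fact p.Prime]
    (P H : Type) [Group P] [Group H] [Fintype P] [Fintype H]
    (hP : IsPGroup p P) (hH : (Nat.card H).Coprime p)
    (φ : H →* MulAut P) :
    ⁅(SemidirectProduct.inl.range : Subgroup (P ⋊[φ] H)), SemidirectProduct.inr.range⁆ =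
      (SemidirectProduct.inl.range : Subgroup (P ⋊[φ] H)) ⊓ pResidual p (P ⋊[φ] H) := by
  classical
  set G := P ⋊[φ] H with hG
  set Pg : Subgroup G := SemidirectProduct.inl.range with hPg
  set Hg : Subgroup G := SemidirectProduct.inr.range with hHg
  set C : Subgroup G := ⁅Pg, Hg⁆ with hC
  haveI hPgN : Pg.Normal := by
    rw [hPg, SemidirectProduct.range_inl_eq_ker_rightHom]
    exact MonoidHom.normal_ker _
  have hCP : C ≤ Pg := Subgroup.commutator_le_left Pg Hg
  -- conjugation by elements of Pg preserves C
  have h1 : ∀ g ∈ Pg, ∀ c ∈ C, g * c * g⁻¹ ∈ C := by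
    intro g hg
    have hle : C ≤ C.comap (MulAut.conj g).toMonoidHom := by
      rw [hC, Subgroup.commutator_le]
      intro a ha b hb
      simp only [Subgroup.mem_comap, MulEquiv.coe_toMonoidHom, MulAut.conj_apply]
      letI : Bracket G G := commutatorElement
      have hid : g * ⁅a, b⁆ * g⁻¹ = ⁅g * a, b⁆ * ⁅g, b⁆⁻¹ := by
        simp only [commutatorElement_def, mul_inv_rev, inv_inv, mul_assoc, inv_mul_cancel_left, mul_inv_cancel_left]
      rw [hid]
      exact mul_mem (Subgroup.commutator_mem_commutator (mul_mem hg ha) hb)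
        (inv_mem (Subgroup.commutator_mem_commutator hg hb))
    intro c hc
    simpa using hle hc
  -- conjugation by elements of Hg preserves C
  have h2 : ∀ g ∈ Hg, ∀ c ∈ C, g * c * g⁻¹ ∈ C := by
    intro g hg
    have hle : C ≤ C.comap (MulAut.conj g).toMonoidHom := by
      rw [hC, Subgroup.commutator_le]
      intro a ha b hb
      simp only [Subgroup.mem_comap, MulEquiv.coe_toMonoidHom, MulAut.conj_apply]
      letI : Bracket G G := commutatorElement
      have hid : g * ⁅a, b⁆ * g⁻¹ = ⁅g * a * g⁻¹, g * b * g⁻¹⁆ := by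
        simp only [commutatorElement_def, mul_inv_rev, inv_inv, mul_assoc, inv_mul_cancel_left, mul_inv_cancel_left]
        exact congrArg (fun y => g * (a * y)) (inv_mul_cancel_left g _).symm
      rw [hid]
      refine Subgroup.commutator_mem_commutator (hPgN.conj_mem a ha g) ?_
      obtain ⟨k, rfl⟩ := hb
      obtain ⟨h0, rfl⟩ := hg
      exact ⟨h0 * k * h0⁻¹, by simp [mul_assoc]⟩
    intro c hc
    simpa using hle hc
  have hdec : ∀ g : G, ∃ x ∈ Pg, ∃ h ∈ Hg, g = x * h := fun g =>
    ⟨SemidirectProduct.inl g.left, ⟨g.left, rfl⟩, SemidirectProduct.inr g.right,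
      ⟨g.right, rfl⟩, (SemidirectProduct.inl_left_mul_inr_right g).symm⟩
  haveI hCN : C.Normal := by
    constructor
    intro c hc g
    obtain ⟨x, hx, h, hh, rfl⟩ := hdec g
    have hid : (x * h) * c * (x * h)⁻¹ = x * (h * c * h⁻¹) * x⁻¹ := by simp only [mul_inv_rev, mul_assoc]; exact congrArg (fun y => x * (h * (c * y))) (mul_inv_rev x h)
    rw [hid]
    exact h1 x hx _ (h2 h hh c hc)
  -- the subgroup M = C ⊔ Hg
  set M : Subgroup G := C ⊔ Hg with hM
  have hHgM : Hg ≤ M := le_sup_right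
  have hCM : C ≤ M := le_sup_left
  have aux : ∀ g : G, (∀ b ∈ Hg, g * b * g⁻¹ ∈ M) → ∀ m ∈ M, g * m * g⁻¹ ∈ M := by
    intro g hgb
    have hle : M ≤ M.comap (MulAut.conj g).toMonoidHom := by
      rw [hM]
      refine sup_le ?_ ?_
      · intro c hc
        simp only [Subgroup.mem_comap, MulEquiv.coe_toMonoidHom, MulAut.conj_apply]
        exact hCM (hCN.conj_mem c hc g)
      · intro b hb
        simp only [Subgroup.mem_comap, MulEquiv.coe_toMonoidHom, MulAut.conj_apply]
        exact hgb b hb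
    intro m hm
    simpa using hle hm
  haveI hMN : M.Normal := by
    constructor
    intro m hm g
    obtain ⟨x, hx, h, hh, rfl⟩ := hdec g
    have hid : (x * h) * m * (x * h)⁻¹ = x * (h * m * h⁻¹) * x⁻¹ := by simp only [mul_inv_rev, mul_assoc]; exact congrArg (fun y => x * (h * (m * y))) (mul_inv_rev x h)
    rw [hid]
    refine aux x ?_ _ (aux h ?_ m hm)
    · intro b hb
      letI : Bracket G G := commutatorElement
      have hid2 : x * b * x⁻¹ = ⁅x, b⁆ * b := by
        simp only [commutatorElement_def, mul_inv_rev, inv_inv, mul_assoc, inv_mul_cancel_left, mul_inv_cancel_left]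
        rw [inv_mul_cancel, mul_one]
      rw [hid2]
      exact mul_mem (hCM (Subgroup.commutator_mem_commutator hx hb)) (hHgM hb)
    · intro b hb
      obtain ⟨k, rfl⟩ := hb
      obtain ⟨h0, rfl⟩ := hh
      exact hHgM ⟨h0 * k * h0⁻¹, by simp [mul_assoc]⟩
  -- cardinalities and index of M
  have cardG : Nat.card G = Nat.card P * Nat.card H := by
    rw [← Nat.card_prod]
    exact Nat.card_congr ⟨fun g => (g.left, g.right), fun x => ⟨x.1, x.2⟩,
      fun g => rfl, fun x => rfl⟩
  have cardHg : Nat.card Hg = Nat.card H :=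
    Nat.card_congr (MonoidHom.ofInjective SemidirectProduct.inr_injective).toEquiv.symm
  have hHgindex : Hg.index = Nat.card P := by
    have hmi := Subgroup.card_mul_index Hg
    rw [cardHg, cardG, mul_comm (Nat.card P)] at hmi
    exact Nat.eq_of_mul_eq_mul_left Nat.card_pos hmi
  obtain ⟨n, hcardP⟩ := IsPGroup.iff_card.mp hP
  have hMidx : ∃ m, M.index = p ^ m := by
    have hdvd : M.index ∣ Hg.index := Subgroup.index_dvd_of_le hHgM
    rw [hHgindex, hcardP] at hdvd
    obtain ⟨m, -, hm⟩ := (Nat.dvd_prime_pow (Fact.out : p.Prime)).mp hdvd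
    exact ⟨m, hm⟩
  -- Pg ⊓ M ≤ C
  have hPMC : Pg ⊓ M ≤ C := by
    rintro g ⟨hgP, hgM⟩
    have hmem : g ∈ ((C : Set G) * (Hg : Set G)) := by
      rw [← Subgroup.normal_mul C Hg]
      exact hgM
    obtain ⟨c, hc, b, hb, rfl⟩ := hmem
    have hbP : b ∈ Pg := by
      have h' := mul_mem (inv_mem (hCP hc)) hgP
      simpa [mul_assoc] using h'
    have hb1 : b = 1 := by
      obtain ⟨x, hx⟩ := hbP
      obtain ⟨k, hk⟩ := hb
      have h' := congrArg SemidirectProduct.left (hx.trans hk.symm)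
      simp only [SemidirectProduct.left_inl, SemidirectProduct.left_inr] at h'
      rw [← hx, h', map_one]
    rw [hb1]
    simpa using hc
  refine le_antisymm (le_inf hCP ?_) ?_
  · -- C ≤ pResidual
    refine le_sInf ?_
    rintro N ⟨hNn, n', hNidx⟩
    have hHgN : Hg ≤ N := by
      rintro b ⟨k, rfl⟩
      set q : G →* G ⧸ N := QuotientGroup.mk' N with hq
      have hd1 : orderOf (q (SemidirectProduct.inr k)) ∣ Nat.card H := by
        refine dvd_trans (orderOf_map_dvd q _) ?_
        rw [orderOf_injective SemidirectProduct.inr SemidirectProduct.inr_injective k]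
        exact orderOf_dvd_natCard k
      have hd2 : orderOf (q (SemidirectProduct.inr k)) ∣ p ^ n' := by
        rw [← hNidx, Subgroup.index_eq_card]
        exact orderOf_dvd_natCard _
      have hcop : Nat.Coprime (Nat.card H) (p ^ n') := hH.pow_right n'
      have hone : orderOf (q (SemidirectProduct.inr k)) = 1 :=
        Nat.dvd_one.mp (hcop ▸ Nat.dvd_gcd hd1 hd2)
      have := orderOf_eq_one_iff.mp hone
      rwa [hq, QuotientGroup.mk'_apply, QuotientGroup.eq_one_iff] at this
    rw [hC, Subgroup.commutator_le]
    intro a ha b hb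
    rw [commutatorElement_def]
    exact mul_mem (hNn.conj_mem b (hHgN hb) a) (inv_mem (hHgN hb))
  · -- Pg ⊓ pResidual ≤ C
    exact le_trans (inf_le_inf_left Pg (sInf_le ⟨hMN, hMidx⟩)) hPMC
end

section
/- Let p be a prime, P a finite p-group, H a finite p'-group acting on P, and G := P ⋊ H. Then O^p(G) equals the subgroup of G generated by ⁅P,H⁆ and H (i.e. O^p(G) = ⁅P,H⁆ ⊔ H, which is normal in G of p-power index). -/
/-- Let `p` be a prime, `P` a finite `p`-group, `H` a finite `p'`-group acting on `P`, and
`G := P ⋊ H`. Then `O^p(G)` equals the subgroup of `G` generated by `⁅P, H⁆` and `H`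
(here `P` and `H` are identified with subgroups of `G`). -/
theorem stmt8 (p : ℕ) [Fact p.Prime]
    (P H : Type) [Group P] [Group H] [Fintype P] [Fintype H]
    (hP : IsPGroup p P) (hH : (Nat.card H).Coprime p)
    (φ : H →* MulAut P) :
    pResidual p (P ⋊[φ] H) =
      ⁅(SemidirectProduct.inl.range : Subgroup (P ⋊[φ] H)), SemidirectProduct.inr.range⁆ ⊔
        (SemidirectProduct.inr.range : Subgroup (P ⋊[φ] H)) := by
  have hfin : Finite (P ⋊[φ] H) := Finite.of_injective (fun g : P ⋊[φ] H => (g.left, g.right))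
    (by rintro ⟨a, b⟩ ⟨c, d⟩ h; simp_all [Prod.ext_iff, SemidirectProduct.ext_iff])
  set Pr : Subgroup (P ⋊[φ] H) := SemidirectProduct.inl.range with hPr
  set Hr : Subgroup (P ⋊[φ] H) := SemidirectProduct.inr.range with hHr
  set K : Subgroup (P ⋊[φ] H) := ⁅Pr, Hr⁆ ⊔ Hr with hK
  -- K equals the normal closure of Hr
  have hKncl : K = Subgroup.normalClosure ((Hr : Subgroup (P ⋊[φ] H)) : Set (P ⋊[φ] H)) := by
    apply le_antisymm
    · apply sup_le
      · rw [Subgroup.commutator_le]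
        intro g hg h hh
        have h1 : g * h * g⁻¹ ∈ Subgroup.normalClosure ((Hr : Subgroup (P ⋊[φ] H)) : Set (P ⋊[φ] H)) :=
          (Subgroup.normalClosure_normal).conj_mem h (Subgroup.subset_normalClosure hh) g
        have h2 : h⁻¹ ∈ Subgroup.normalClosure ((Hr : Subgroup (P ⋊[φ] H)) : Set (P ⋊[φ] H)) :=
          inv_mem (Subgroup.subset_normalClosure hh)
        simpa [commutatorElement_def, mul_assoc] using mul_mem h1 h2
      · exact Subgroup.le_normalClosure
    · rw [Subgroup.normalClosure, Subgroup.closure_le]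
      intro x hx
      rw [Group.mem_conjugatesOfSet_iff] at hx
      obtain ⟨a, ha, hconj⟩ := hx
      obtain ⟨h, rfl⟩ := ha
      obtain ⟨c, rfl⟩ := isConj_iff.mp hconj
      open scoped commutatorElement in
      have key : c * SemidirectProduct.inr h * c⁻¹ =
          ⁅(SemidirectProduct.inl c.left : P ⋊[φ] H),
            (SemidirectProduct.inr (c.right * h * c.right⁻¹) : P ⋊[φ] H)⁆ *
            SemidirectProduct.inr (c.right * h * c.right⁻¹) := by
        ext <;> simp [commutatorElement_def, mul_assoc]
      rw [key]
      exact mul_mem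
        (Subgroup.mem_sup_left (Subgroup.commutator_mem_commutator ⟨_, rfl⟩ ⟨_, rfl⟩))
        (Subgroup.mem_sup_right ⟨_, rfl⟩)
  have hKnormal : K.Normal := hKncl ▸ Subgroup.normalClosure_normal
  apply le_antisymm
  · -- pResidual ≤ K : K is normal of p-power index
    apply sInf_le
    refine ⟨hKnormal, ?_⟩
    have hsurj : Function.Surjective ((QuotientGroup.mk' K).comp SemidirectProduct.inl) := by
      intro q
      obtain ⟨g, rfl⟩ := QuotientGroup.mk'_surjective K q
      refine ⟨g.left, ?_⟩
      simp only [MonoidHom.comp_apply, QuotientGroup.mk'_apply]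
      rw [QuotientGroup.eq]
      have : (SemidirectProduct.inl g.left : P ⋊[φ] H)⁻¹ * g = SemidirectProduct.inr g.right := by
        ext <;>
          simp [SemidirectProduct.mul_left, SemidirectProduct.mul_right]
      rw [this]
      exact Subgroup.mem_sup_right ⟨_, rfl⟩
    have hpq : IsPGroup p ((P ⋊[φ] H) ⧸ K) := hP.of_surjective _ hsurj
    obtain ⟨n, hn⟩ := IsPGroup.iff_card.mp hpq
    exact ⟨n, hn⟩
  · -- K ≤ every normal subgroup of p-power index
    apply le_sInf
    rintro N ⟨hN, n, hn⟩
    have hHN : Hr ≤ N := by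
      rintro _ ⟨h, rfl⟩
      have h1 : orderOf (((QuotientGroup.mk' N).comp SemidirectProduct.inr) h) ∣ Nat.card H :=
        (orderOf_map_dvd _ h).trans (orderOf_dvd_natCard h)
      have h2 : orderOf (((QuotientGroup.mk' N).comp SemidirectProduct.inr) h) ∣ p ^ n := by
        have := orderOf_dvd_natCard (((QuotientGroup.mk' N).comp SemidirectProduct.inr) h)
        rwa [← Subgroup.index_eq_card, hn] at this
      have hcop : (Nat.card H).Coprime (p ^ n) := hH.pow_right n
      have : orderOf (((QuotientGroup.mk' N).comp SemidirectProduct.inr) h) = 1 :=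
        Nat.eq_one_of_dvd_coprimes hcop h1 h2
      have := orderOf_eq_one_iff.mp this
      simpa [QuotientGroup.eq_one_iff] using this
    apply sup_le
    · rw [Subgroup.commutator_le]
      intro g hg h hh
      have h1 : g * h * g⁻¹ ∈ N := hN.conj_mem h (hHN hh) g
      have h2 : h⁻¹ ∈ N := inv_mem (hHN hh)
      simpa [commutatorElement_def, mul_assoc] using mul_mem h1 h2
    · exact hHN
end

section
/- Let k be an algebraically closed field of characteristic p > 0, P a finite p-group, H a finite abelian p'-group acting on P with C_P(H) = 1, and G := P ⋊ H. Then for every simple kG-module S, every short exact sequence of kG-modules 0 → S → E → S → 0 splits; that is, Ext¹_{kG}(S, S) = 0 for all simple kG-modules S. -/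
open scoped IsMulCommutative in
theorem aux_crossed (p : ℕ) [Fact p.Prime] {H : Type} [Group H] [Fintype H]
    (hH : (Nat.card H).Coprime p) :
    ∀ (n : ℕ) (N : Type) [Group N] [Finite N], Nat.card N = n →
      IsPGroup p N → ∀ (η : H →* MulAut N) (σ : H → N),
      (∀ h h', σ (h * h') = σ h * η h (σ h')) →
      ∃ u : N, ∀ h, σ h = u * (η h u)⁻¹ := by
  intro n
  induction n using Nat.strong_induction_on with
  | _ n ih =>
  intro N _ _ hcard hN η σ hσ
  rcases subsingleton_or_nontrivial N with hs | hnt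
  · exact ⟨1, fun h => Subsingleton.elim _ _⟩
  set Z := Subgroup.center N with hZ
  haveI : Nontrivial Z := hN.center_nontrivial
  have hmapZ : ∀ h : H, Z.map (η h).toMonoidHom = Z := fun h =>
    Subgroup.characteristic_iff_map_eq.mp inferInstance (η h)
  -- quotient action
  let ηq : H →* MulAut (N ⧸ Z) :=
    { toFun := fun h => QuotientGroup.congr Z Z (η h) (hmapZ h)
      map_one' := by
        ext x
        induction x using QuotientGroup.induction_on with
        | H x => simp [QuotientGroup.congr_mk]
      map_mul' := fun h h' => by
        ext x
        induction x using QuotientGroup.induction_on with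
        | H x => simp [QuotientGroup.congr_mk]; rfl }
  have hηq : ∀ (h : H) (x : N), ηq h ((x : N ⧸ Z)) = ((η h x : N) : N ⧸ Z) := fun h x =>
    QuotientGroup.congr_mk Z Z (η h) (hmapZ h) x
  let σq : H → N ⧸ Z := fun h => ((σ h : N) : N ⧸ Z)
  have hσq : ∀ h h', σq (h * h') = σq h * ηq h (σq h') := by
    intro h h'
    simp only [σq, hσ, hηq, QuotientGroup.mk_mul]
  have hlt : Nat.card (N ⧸ Z) < n := by
    have h1 : Nat.card N = Nat.card (N ⧸ Z) * Nat.card Z :=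
      (Subgroup.card_eq_card_quotient_mul_card_subgroup Z)
    have h2 : 1 < Nat.card Z := Finite.one_lt_card
    have h3 : 0 < Nat.card (N ⧸ Z) := Nat.card_pos
    calc Nat.card (N ⧸ Z) < Nat.card (N ⧸ Z) * Nat.card Z := by
          exact (Nat.lt_mul_iff_one_lt_right h3).mpr h2
      _ = n := by rw [← h1, hcard]
  obtain ⟨uq, huq⟩ := ih _ hlt (N ⧸ Z) rfl (hN.to_quotient Z) ηq σq hσq
  obtain ⟨u₁, rfl⟩ := QuotientGroup.mk_surjective uq
  -- centre-valued crossed hom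
  have hτZ : ∀ h : H, u₁⁻¹ * σ h * η h u₁ ∈ Z := by
    intro h
    have := huq h
    rw [hηq] at this
    have h2 : ((σ h : N) : N ⧸ Z) = ((u₁ * (η h u₁)⁻¹ : N) : N ⧸ Z) := by
      simpa using this
    have h3 : (u₁ * (η h u₁)⁻¹)⁻¹ * σ h ∈ Z := (QuotientGroup.eq).mp h2.symm
    have h4 : (η h u₁) * u₁⁻¹ * σ h ∈ Z := by
      simpa [mul_inv_rev, mul_assoc] using h3
    have h5 := Subgroup.Normal.conj_mem inferInstance _ h4 ((η h u₁)⁻¹)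
    simpa [mul_assoc] using h5
  let τ' : H → Z := fun h => ⟨u₁⁻¹ * σ h * η h u₁, hτZ h⟩
  have hmemZ : ∀ (h : H) (z : Z), η h (z : N) ∈ Z := by
    intro h z
    exact Subgroup.characteristic_iff_le_comap.mp inferInstance (η h) z.2
  let eZ : H → (Z →* Z) := fun h =>
    { toFun := fun z => ⟨η h (z : N), hmemZ h z⟩
      map_one' := by ext; simp
      map_mul' := fun a b => by ext; simp }
  have hτc : ∀ h h', τ' (h * h') = τ' h * eZ h (τ' h') := by
    intro h h'
    ext
    simp only [τ', eZ, Subgroup.coe_mul, MonoidHom.coe_mk, OneHom.coe_mk, hσ, map_mul,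
      map_inv, MulAut.mul_apply]
    group
  set m := Nat.card H with hm
  have hmpos : m ≠ 0 := Nat.card_ne_zero.mpr ⟨inferInstance, inferInstance⟩
  have hcop : (Nat.card Z).Coprime m := by
    obtain ⟨j, hj⟩ := IsPGroup.iff_card.mp (hN.to_subgroup Z)
    rw [hj]
    exact Nat.Coprime.pow_left j (Nat.coprime_comm.mp hH)
  let c : Z := ∏ h' : H, τ' h'
  have hkey : ∀ h, eZ h c = ((τ' h)⁻¹) ^ m * c := by
    intro h
    have h1 : eZ h c = ∏ h' : H, eZ h (τ' h') := map_prod (eZ h) _ _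
    have h2 : ∀ h', eZ h (τ' h') = (τ' h)⁻¹ * τ' (h * h') := by
      intro h'; rw [hτc h h']; group
    rw [h1]
    simp only [h2]
    rw [Finset.prod_mul_distrib, Finset.prod_const, Finset.card_univ]
    congr 1
    · rw [hm, Nat.card_eq_fintype_card]
    · exact Fintype.prod_equiv (Equiv.mulLeft h) _ _ (fun h' => rfl)
  let u₂ : Z := (powCoprime hcop).symm c
  have hu₂ : u₂ ^ m = c := (powCoprime hcop).apply_symm_apply c
  have hkey2 : ∀ h, τ' h = u₂ * (eZ h u₂)⁻¹ := by
    intro h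
    apply (powCoprime hcop).injective
    show (τ' h) ^ m = (u₂ * (eZ h u₂)⁻¹) ^ m
    have e1 : (u₂ * (eZ h u₂)⁻¹) ^ m = c * (eZ h c)⁻¹ := by
      rw [mul_pow, inv_pow, ← MonoidHom.map_pow, hu₂]
    rw [e1, hkey h]
    group
  refine ⟨u₁ * (u₂ : N), fun h => ?_⟩
  have h5 : (τ' h : N) = (u₂ : N) * (η h (u₂ : N))⁻¹ := by
    rw [hkey2 h]; rfl
  have h6 : (u₂ : N) * (η h (u₂ : N))⁻¹ = u₁⁻¹ * σ h * η h u₁ := h5.symm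
  rw [map_mul, mul_inv_rev]
  calc σ h = u₁ * (u₁⁻¹ * σ h * η h u₁) * (η h u₁)⁻¹ := by group
    _ = u₁ * ((u₂:N) * (η h (u₂:N))⁻¹) * (η h u₁)⁻¹ := by rw [h6]
    _ = u₁ * (u₂:N) * ((η h (u₂:N))⁻¹ * (η h u₁)⁻¹) := by group

theorem aux_invchar (k : Type) [Field k] (p : ℕ) [Fact p.Prime]
    {P H : Type} [Group P] [Group H] [Fintype P] [Fintype H]
    (hP : IsPGroup p P) (hH : (Nat.card H).Coprime p) (φ : H →* MulAut P)
    (hfix : ∀ x : P, (∀ h : H, φ h x = x) → x = 1)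
    (f : P → k) (hf : ∀ a b, f (a * b) = f a + f b)
    (hinv : ∀ (h : H) (a : P), f (φ h a) = f a) : ∀ a, f a = 0 := by
  have h1 : f 1 = 0 := by have := hf 1 1; simpa using this
  have hinvf : ∀ a, f a⁻¹ = - f a := by
    intro a
    have := hf a a⁻¹
    simp [h1] at this
    linear_combination -this
  by_contra hcon
  push_neg at hcon
  obtain ⟨x, hx⟩ := hcon
  let K : Subgroup P :=
    { carrier := {a | f a = 0}
      one_mem' := h1
      mul_mem' := fun {a b} ha hb => by
        simp only [Set.mem_setOf_eq] at *
        rw [hf]; rw [ha, hb]; ring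
      inv_mem' := fun {a} ha => by
        simp only [Set.mem_setOf_eq] at *
        rw [hinvf, ha]; ring }
  have hmemK : ∀ a : P, a ∈ K ↔ f a = 0 := fun a => Iff.rfl
  have hφK : ∀ (h : H) (a : P), a ∈ K → φ h a ∈ K := fun h a ha => by
    rw [hmemK] at *
    rw [hinv]; exact ha
  let η : H →* MulAut K :=
    { toFun := fun h =>
        { toFun := fun z => ⟨φ h z, hφK h z z.2⟩
          invFun := fun z => ⟨φ h⁻¹ z, hφK h⁻¹ z z.2⟩
          left_inv := fun z => by
            ext; simp [← MulAut.mul_apply, ← map_mul]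
          right_inv := fun z => by
            ext; show φ h (φ h⁻¹ z) = z
            rw [← MulAut.mul_apply, ← map_mul, mul_inv_cancel, map_one, MulAut.one_apply]
          map_mul' := fun a b => by ext; simp }
      map_one' := by ext; simp
      map_mul' := fun h h' => by ext z; simp [MulAut.mul_apply] }
  have hKp : IsPGroup p K := hP.to_subgroup K
  let σ : H → K := fun h => ⟨x⁻¹ * φ h x, by
    rw [hmemK, hf, hinvf, hinv]; ring⟩
  have hσ : ∀ h h', σ (h * h') = σ h * η h (σ h') := by
    intro h h'
    ext
    show x⁻¹ * φ (h * h') x = (x⁻¹ * φ h x) * φ h (x⁻¹ * φ h' x)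
    simp only [map_mul, map_inv, MulAut.mul_apply]
    group
  obtain ⟨u, hu⟩ := aux_crossed p hH (Nat.card K) K rfl hKp η σ hσ
  have hufix : ∀ h : H, φ h (x * (u : P)) = x * (u : P) := by
    intro h
    have := congrArg (Subtype.val) (hu h)
    have h2 : x⁻¹ * φ h x = (u : P) * (φ h (u : P))⁻¹ := this
    rw [map_mul]
    have h3 : φ h x = x * ((u : P) * (φ h (u : P))⁻¹) := by
      rw [← h2]; group
    rw [h3]; group
  have := hfix _ hufix
  have hxu : x = (u : P)⁻¹ := mul_eq_one_iff_eq_inv.mp this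
  rw [hxu, hinvf] at hx
  have : f (u : P) = 0 := u.2
  rw [this] at hx
  simp at hx

theorem aux_homtriv (k : Type) [Field k] (p : ℕ) [Fact p.Prime] (hchar : CharP k p)
    {P H : Type} [Group P] [CommGroup H] [Fintype P] [Fintype H]
    (hP : IsPGroup p P) (hH : (Nat.card H).Coprime p) (φ : H →* MulAut P)
    (hfix : ∀ x : P, (∀ h : H, φ h x = x) → x = 1)
    (z : P ⋊[φ] H → k) (hz : ∀ x y, z (x * y) = z x + z y) : ∀ x, z x = 0 := by
  have h1 : z 1 = 0 := by have := hz 1 1; simpa using this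
  have hinvz : ∀ x, z x⁻¹ = - z x := by
    intro x
    have := hz x x⁻¹
    simp [h1] at this
    linear_combination -this
  have hpow : ∀ (x : P ⋊[φ] H) (n : ℕ), z (x ^ n) = n • z x := by
    intro x n
    induction n with
    | zero => simpa using h1
    | succ n ihn => rw [pow_succ, hz, ihn, succ_nsmul]
  have hinr : ∀ h : H, z (SemidirectProduct.inr h) = 0 := by
    intro h
    have h2 : (SemidirectProduct.inr h : P ⋊[φ] H) ^ (Nat.card H) =
        SemidirectProduct.inr (h ^ (Nat.card H)) := (map_pow _ _ _).symm
    have h3 : h ^ (Nat.card H) = 1 := pow_card_eq_one'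
    have h4 := hpow (SemidirectProduct.inr h) (Nat.card H)
    rw [h2, h3] at h4
    simp only [map_one, h1] at h4
    have h5 : ((Nat.card H : k)) * z (SemidirectProduct.inr h) = 0 := by
      rw [← nsmul_eq_mul]; exact h4.symm
    have h6 : (Nat.card H : k) ≠ 0 := by
      rw [Ne, CharP.cast_eq_zero_iff k p]
      intro hdvd
      have h7 : p = 1 := Nat.eq_one_of_dvd_coprimes hH hdvd dvd_rfl
      exact (Fact.out : p.Prime).one_lt.ne' h7
    exact (mul_eq_zero.mp h5).resolve_left h6
  have hinl : ∀ a : P, z (SemidirectProduct.inl a) = 0 := by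
    apply aux_invchar k p hP hH φ hfix
    · intro a b
      rw [show (SemidirectProduct.inl (a * b) : P ⋊[φ] H) =
        SemidirectProduct.inl a * SemidirectProduct.inl b from map_mul _ _ _, hz]
    · intro h a
      rw [SemidirectProduct.inl_aut, hz, hz]
      simp [hinr, hinvz]
  intro x
  rw [← SemidirectProduct.inl_left_mul_inr_right x, hz, hinl, hinr]
  ring

open MonoidAlgebra

theorem aux_rep (k : Type) [Field k] [IsAlgClosed k] (p : ℕ) [Fact p.Prime] (hchar : CharP k p)
    (G : Type) [Group G] [Finite G]
    (N : Subgroup G) [hNnorm : N.Normal] (hN : IsPGroup p N)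
    (hcomm : ∀ x y : G, x * y * x⁻¹ * y⁻¹ ∈ N)
    (hhom : ∀ z : G → k, (∀ x y : G, z (x * y) = z x + z y) → ∀ x, z x = 0)
    (S : Type) [AddCommGroup S] [Module (MonoidAlgebra k G) S]
    (hS : IsSimpleModule (MonoidAlgebra k G) S)
    (E : Type) [AddCommGroup E] [Module (MonoidAlgebra k G) E]
    (f : S →ₗ[MonoidAlgebra k G] E) (g : E →ₗ[MonoidAlgebra k G] S)
    (hf : Function.Injective f) (hg : Function.Surjective g)
    (hfg : LinearMap.range f = LinearMap.ker g) :
    ∃ h : S →ₗ[MonoidAlgebra k G] E, g ∘ₗ h = LinearMap.id := by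
  classical
  haveI := hS
  haveI : Nontrivial S := IsSimpleModule.nontrivial (MonoidAlgebra k G) S
  set A : k →+* MonoidAlgebra k G := algebraMap k (MonoidAlgebra k G) with hA
  -- the group action on S
  set σ : G → S → S := fun x s => (of k G x) • s with hσdef
  have σ_mul : ∀ (x y : G) (s : S), σ (x * y) s = σ x (σ y s) := by
    intro x y s; simp only [hσdef, map_mul, mul_smul]
  have σ_one : ∀ s : S, σ 1 s = s := by
    intro s; show (of k G 1) • s = s; rw [map_one, one_smul]
  have σ_add : ∀ (x : G) (s t : S), σ x (s + t) = σ x s + σ x t :=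
    fun x s t => smul_add _ s t
  have σ_zero : ∀ x : G, σ x (0 : S) = 0 := fun x => smul_zero _
  have σ_alg : ∀ (x : G) (t : k) (s : S), σ x (A t • s) = A t • σ x s := by
    intro x t s
    simp only [hσdef, hA, ← mul_smul, Algebra.commutes]
  have σ_cancel : ∀ (x : G) (s : S), σ x⁻¹ (σ x s) = s := by
    intro x s; rw [← σ_mul, inv_mul_cancel, σ_one]
  -- N acts trivially on S
  have Tsmul : ∀ (r : MonoidAlgebra k G) (s : S), (∀ a ∈ N, σ a s = s) →
      (∀ a ∈ N, σ a (r • s) = r • s) := by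
    intro r
    induction r using MonoidAlgebra.induction_on with
    | of x =>
      intro s hs a ha
      have h1 : σ a (σ x s) = σ x (σ (x⁻¹ * a * x) s) := by
        rw [← σ_mul, ← σ_mul]
        congr 1
        group
      have h2 : x⁻¹ * a * x ∈ N := hNnorm.conj_mem' a ha x
      show σ a (σ x s) = σ x s
      rw [h1, hs _ h2]
    | add r₁ r₂ ih₁ ih₂ =>
      intro s hs a ha
      rw [add_smul, σ_add, ih₁ s hs a ha, ih₂ s hs a ha]
    | smul t r ih =>
      intro s hs a ha
      rw [Algebra.smul_def, mul_smul, σ_alg, ih s hs a ha]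
  have htriv : ∀ (a : G), a ∈ N → ∀ s : S, σ a s = s := by
    obtain ⟨s₀, hs₀⟩ := exists_ne (0 : S)
    have hps : ∀ s : S, p • s = 0 := by
      intro s
      rw [← Nat.cast_smul_eq_nsmul (MonoidAlgebra k G),
        show ((p : ℕ) : MonoidAlgebra k G) = A ((p : ℕ) : k) from (map_natCast A p).symm,
        CharP.cast_eq_zero k p, map_zero, zero_smul]
    have hzmod : Module (ZMod p) S := AddCommGroup.zmodModule hps
    letI : Module (ZMod p) S := hzmod
    have σ_zsmulℤ : ∀ (x : G) (n : ℤ) (s : S), σ x (n • s) = n • σ x s := by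
      intro x n s
      exact (AddMonoidHom.mk' (σ x) (σ_add x)).map_zsmul n s
    have σ_zsmul : ∀ (x : G) (t : ZMod p) (s : S), σ x (t • s) = t • σ x s := by
      intro x t s
      obtain ⟨n, rfl⟩ := ZMod.intCast_surjective t
      rw [Int.cast_smul_eq_zsmul, Int.cast_smul_eq_zsmul, σ_zsmulℤ]
    let ℓ : G → S →ₗ[ZMod p] S := fun x =>
      { toFun := σ x
        map_add' := σ_add x
        map_smul' := fun t s => σ_zsmul x t s }
    set M : Submodule (ZMod p) S :=
      Submodule.span (ZMod p) (Set.range (fun a : N => σ (a : G) s₀)) with hM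
    have hs₀M : s₀ ∈ M := by
      have h9 : s₀ ∈ Set.range (fun a : N => σ (a : G) s₀) := by
        refine ⟨(1 : N), ?_⟩
        show σ ((1 : N) : G) s₀ = s₀
        rw [OneMemClass.coe_one]
        exact σ_one s₀
      exact Submodule.subset_span h9
    have hMmap : ∀ (a : N), ∀ m ∈ M, σ (a : G) m ∈ M := by
      intro a m hm
      have h1 : M.map (ℓ (a : G)) ≤ M := by
        rw [hM, Submodule.map_span, Submodule.span_le]
        rintro _ ⟨_, ⟨b, rfl⟩, rfl⟩
        refine Submodule.subset_span ⟨a * b, ?_⟩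
        show σ ((a : G) * (b : G)) s₀ = ℓ (a : G) (σ (b : G) s₀)
        rw [σ_mul]; rfl
      exact h1 ⟨m, hm, rfl⟩
    haveI : Module.Finite (ZMod p) M :=
      Module.Finite.span_of_finite (ZMod p) (Set.finite_range _)
    haveI : Finite M := Module.finite_of_finite (ZMod p)
    letI : MulAction N M :=
      { smul := fun a m => ⟨σ (a : G) (m : S), hMmap a m m.2⟩
        one_smul := fun m => Subtype.ext (σ_one (m : S))
        mul_smul := fun a b m => Subtype.ext (σ_mul (a : G) (b : G) (m : S)) }
    have hsmulM : ∀ (a : N) (m : M), ((a • m : M) : S) = σ (a : G) (m : S) := fun a m => rfl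
    have hcard := IsPGroup.card_modEq_card_fixedPoints (α := M) hN
    haveI : Nontrivial M := ⟨⟨⟨s₀, hs₀M⟩, 0, by simp [Subtype.ext_iff, hs₀]⟩⟩
    have hdvdM : p ∣ Nat.card M := by
      haveI : Fintype M := Fintype.ofFinite M
      have h1 : Fintype.card M = Fintype.card (ZMod p) ^ Module.finrank (ZMod p) M :=
        Module.card_eq_pow_finrank
      have h2 : Module.finrank (ZMod p) M ≠ 0 := by
        intro h0
        have := Fintype.one_lt_card (α := M)
        rw [h1, h0, pow_zero] at this
        omega
      rw [Nat.card_eq_fintype_card, h1, ZMod.card]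
      exact dvd_pow_self p h2
    have h0fix : (0 : M) ∈ MulAction.fixedPoints N M := by
      intro a
      exact Subtype.ext (σ_zero (a : G))
    have hdvdF : p ∣ Nat.card (MulAction.fixedPoints N M) := by
      have h1 : Nat.card (MulAction.fixedPoints N M) ≡ 0 [MOD p] :=
        hcard.symm.trans ((Nat.modEq_zero_iff_dvd).mpr hdvdM)
      exact (Nat.modEq_zero_iff_dvd).mp h1
    have hpos : 0 < Nat.card (MulAction.fixedPoints N M) := by
      haveI : Nonempty (MulAction.fixedPoints N M) := ⟨⟨0, h0fix⟩⟩
      exact Nat.card_pos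
    have hnontrivF : 1 < Nat.card (MulAction.fixedPoints N M) :=
      lt_of_lt_of_le (Fact.out : p.Prime).one_lt (Nat.le_of_dvd hpos hdvdF)
    have hexm : ∃ m : M, (∀ a : N, a • m = m) ∧ (m : S) ≠ 0 := by
      haveI := Finite.one_lt_card_iff_nontrivial.mp hnontrivF
      obtain ⟨⟨m₁, hm₁⟩, ⟨m₂, hm₂⟩, hne⟩ :=
        (nontrivial_iff (α := MulAction.fixedPoints N M)).mp inferInstance
      by_cases h1 : (m₁ : S) = 0
      · refine ⟨m₂, hm₂, fun h2 => hne ?_⟩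
        apply Subtype.ext
        apply Subtype.ext
        show (m₁ : S) = (m₂ : S)
        rw [h1, h2]
      · exact ⟨m₁, hm₁, h1⟩
    obtain ⟨m, hmfix, hm0⟩ := hexm
    -- the fixed-point submodule over the group algebra
    let T : Submodule (MonoidAlgebra k G) S :=
      { carrier := {s | ∀ a ∈ N, σ a s = s}
        add_mem' := fun {s t} hs ht a ha => by rw [σ_add, hs a ha, ht a ha]
        zero_mem' := fun a ha => σ_zero a
        smul_mem' := fun r s hs => Tsmul r s hs }
    have hmT : (m : S) ∈ T := by
      intro a ha
      have := hmfix ⟨a, ha⟩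
      rw [Subtype.ext_iff] at this
      exact this
    have hTne : T ≠ ⊥ := by
      intro hbot
      rw [hbot] at hmT
      exact hm0 hmT
    have hTtop : T = ⊤ := (eq_bot_or_eq_top T).resolve_left hTne
    intro a ha s
    have hsT : s ∈ T := by rw [hTtop]; trivial
    exact hsT a ha
  -- all the action operators commute
  have σ_comm : ∀ (x y : G) (s : S), σ x (σ y s) = σ y (σ x s) := by
    intro x y s
    rw [← σ_mul, ← σ_mul]
    have h1 : x * y = (y * x) * (x⁻¹ * y⁻¹ * x * y) := by group
    have h2 : x⁻¹ * y⁻¹ * x * y ∈ N := by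
      have := hcomm x⁻¹ y⁻¹
      simpa using this
    rw [h1, σ_mul, htriv _ h2]
  -- each σ x is linear over the group algebra
  have σ_lin : ∀ (x : G) (r : MonoidAlgebra k G) (s : S), σ x (r • s) = r • σ x s := by
    intro x r
    induction r using MonoidAlgebra.induction_on with
    | of y => intro s; exact σ_comm x y s
    | add r₁ r₂ ih₁ ih₂ => intro s; rw [add_smul, add_smul, σ_add, ih₁, ih₂]
    | smul t r ih => intro s; rw [Algebra.smul_def, mul_smul, mul_smul, σ_alg, ih]
  -- scalar structure
  letI : Module k S := Module.compHom S A
  have hks : ∀ (t : k) (s : S), t • s = A t • s := fun t s => rfl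
  obtain ⟨s₀, hs₀⟩ := exists_ne (0 : S)
  have hSpanR : ∀ s : S, ∃ r : MonoidAlgebra k G, r • s₀ = s := by
    intro s
    have h1 : Submodule.span (MonoidAlgebra k G) {s₀} ≠ ⊥ := by
      rw [Ne, Submodule.span_singleton_eq_bot]
      exact hs₀
    have h2 := (eq_bot_or_eq_top (Submodule.span (MonoidAlgebra k G) {s₀})).resolve_left h1
    have h3 : s ∈ Submodule.span (MonoidAlgebra k G) {s₀} := by rw [h2]; trivial
    exact Submodule.mem_span_singleton.mp h3
  have key : ∀ (r : MonoidAlgebra k G) (W : Submodule k S),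
      (∀ x : G, σ x s₀ ∈ W) → r • s₀ ∈ W := by
    intro r
    induction r using MonoidAlgebra.induction_on with
    | of x => intro W hW; exact hW x
    | add r₁ r₂ ih₁ ih₂ =>
      intro W hW; rw [add_smul]; exact W.add_mem (ih₁ W hW) (ih₂ W hW)
    | smul t r ih =>
      intro W hW
      rw [Algebra.smul_def, mul_smul, ← hks]
      exact W.smul_mem t (ih W hW)
  have hWtop : Submodule.span k (Set.range (fun x : G => σ x s₀)) = ⊤ := by
    rw [Submodule.eq_top_iff']
    intro s
    obtain ⟨r, rfl⟩ := hSpanR s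
    exact key r _ (fun x => Submodule.subset_span ⟨x, rfl⟩)
  haveI : Module.Finite k S := by
    rw [Module.finite_def, ← hWtop]
    exact Submodule.fg_span (Set.finite_range _)
  -- every group element acts by a nonzero scalar
  have hscal : ∀ x : G, ∃ μ : k, μ ≠ 0 ∧ ∀ s : S, σ x s = A μ • s := by
    intro x
    let Lk : Module.End k S :=
      { toFun := σ x
        map_add' := σ_add x
        map_smul' := fun t s => by
          simp only [RingHom.id_apply]
          rw [hks, hks, σ_alg] }
    obtain ⟨μ, hμ⟩ := Module.End.exists_eigenvalue Lk
    obtain ⟨v, hv⟩ := hμ.exists_hasEigenvector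
    let D : S →ₗ[MonoidAlgebra k G] S :=
      { toFun := fun s => σ x s - A μ • s
        map_add' := fun s t => by rw [σ_add, smul_add]; abel
        map_smul' := fun r s => by
          simp only [RingHom.id_apply]
          rw [σ_lin, smul_sub]
          congr 1
          rw [← mul_smul, ← mul_smul, Algebra.commutes] }
    have hDv : D v = 0 := by
      show σ x v - A μ • v = 0
      have h1 : σ x v = μ • v := hv.apply_eq_smul
      rw [h1, hks, sub_self]
    have hD0 : D = 0 := by
      rcases LinearMap.bijective_or_eq_zero D with hbij | h0
      · exfalso
        have h2 : v = 0 := by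
          apply hbij.injective
          rw [hDv, map_zero]
        exact hv.right h2
      · exact h0
    have hDs : ∀ s : S, σ x s = A μ • s := by
      intro s
      have h3 : D s = 0 := by rw [hD0]; rfl
      have h4 : σ x s - A μ • s = 0 := h3
      rw [sub_eq_zero] at h4
      exact h4
    refine ⟨μ, ?_, hDs⟩
    intro h0
    apply hs₀
    have h5 : σ x s₀ = 0 := by rw [hDs, h0, map_zero, zero_smul]
    have h6 := σ_cancel x s₀
    rw [h5, σ_zero] at h6
    exact h6.symm
  choose c hc0 hc using hscal
  have hcancel : ∀ t t' : k, A t • s₀ = A t' • s₀ → t = t' := by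
    intro t t' htt
    by_contra hne
    have h1 : (t - t') ≠ 0 := sub_ne_zero.mpr hne
    have h2 : A (t - t') • s₀ = 0 := by rw [map_sub, sub_smul, htt, sub_self]
    have h3 : A ((t - t')⁻¹ * (t - t')) • s₀ = 0 := by
      rw [map_mul, mul_smul, h2, smul_zero]
    rw [inv_mul_cancel₀ h1, map_one, one_smul] at h3
    exact hs₀ h3
  have cmul : ∀ x y : G, c (x * y) = c x * c y := by
    intro x y
    apply hcancel
    rw [← hc, map_mul, mul_smul, ← hc, ← hc, ← σ_mul]
  -- coordinates: S is one-dimensional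
  have hcoordE : ∀ s : S, ∃ t : k, A t • s₀ = s := by
    intro s
    obtain ⟨r, rfl⟩ := hSpanR s
    have hW : ∀ x : G, σ x s₀ ∈ Submodule.span k {s₀} := by
      intro x
      rw [hc x, ← hks]
      exact Submodule.smul_mem _ _ (Submodule.mem_span_singleton_self s₀)
    obtain ⟨t, ht⟩ := Submodule.mem_span_singleton.mp (key r _ hW)
    exact ⟨t, by rw [← hks]; exact ht⟩
  choose coord hcoord using hcoordE
  have coord_unique : ∀ (t : k) (s : S), A t • s₀ = s → coord s = t := by
    intro t s h
    apply hcancel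
    rw [hcoord s, h]
  have coord_add : ∀ s t : S, coord (s + t) = coord s + coord t := by
    intro s t
    apply coord_unique
    rw [map_add, add_smul, hcoord, hcoord]
  have coord_smul : ∀ (t : k) (s : S), coord (A t • s) = t * coord s := by
    intro t s
    apply coord_unique
    rw [map_mul, mul_smul, hcoord]
  have coord_sigma : ∀ (x : G) (s : S), coord (σ x s) = coord s * c x := by
    intro x s
    apply coord_unique
    rw [map_mul, mul_smul]
    calc A (coord s) • A (c x) • s₀ = A (coord s) • σ x s₀ := by rw [← hc]
      _ = σ x (A (coord s) • s₀) := (σ_alg x _ s₀).symm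
      _ = σ x s := by rw [hcoord]
  -- the E side
  obtain ⟨e₀, he₀⟩ := hg s₀
  set σE : G → E → E := fun x e => (of k G x) • e with hσEdef
  have σE_mul : ∀ (x y : G) (e : E), σE (x * y) e = σE x (σE y e) := by
    intro x y e; simp only [hσEdef, map_mul, mul_smul]
  have σE_add : ∀ (x : G) (e e' : E), σE x (e + e') = σE x e + σE x e' :=
    fun x e e' => smul_add _ e e'
  have σE_alg : ∀ (x : G) (t : k) (e : E), σE x (A t • e) = A t • σE x e := by
    intro x t e
    simp only [hσEdef, hA, ← mul_smul, Algebra.commutes]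
  have gσ : ∀ (x : G) (e : E), g (σE x e) = σ x (g e) := fun x e => g.map_smul _ _
  have fσ : ∀ (x : G) (s : S), f (σ x s) = σE x (f s) := fun x s => f.map_smul _ _
  set ψ : G → E := fun x => A (c x)⁻¹ • σE x e₀ - e₀ with hψdef
  have hψker : ∀ x : G, g (ψ x) = 0 := by
    intro x
    show g (A (c x)⁻¹ • σE x e₀ - e₀) = 0
    rw [map_sub, g.map_smul, gσ, he₀, hc x, ← mul_smul, ← map_mul,
      inv_mul_cancel₀ (hc0 x), map_one, one_smul, sub_self]
  have hψmem : ∀ x : G, ∃ t : k, ψ x = f (A t • s₀) := by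
    intro x
    have h1 : ψ x ∈ LinearMap.ker g := hψker x
    rw [← hfg] at h1
    obtain ⟨w, hw⟩ := h1
    exact ⟨coord w, by rw [hcoord w, hw]⟩
  choose z hz using hψmem
  have hψadd : ∀ x y : G, ψ (x * y) = ψ x + ψ y := by
    intro x y
    have e1 : A (c y)⁻¹ • σE y e₀ = ψ y + e₀ := by
      show A (c y)⁻¹ • σE y e₀ = (A (c y)⁻¹ • σE y e₀ - e₀) + e₀
      rw [sub_add_cancel]
    have e2 : ψ (x * y) = A (c x)⁻¹ • σE x (ψ y) + ψ x := by
      show A (c (x * y))⁻¹ • σE (x * y) e₀ - e₀ =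
        A (c x)⁻¹ • σE x (ψ y) + (A (c x)⁻¹ • σE x e₀ - e₀)
      rw [cmul, mul_inv, map_mul, σE_mul, mul_smul, ← σE_alg, e1, σE_add, smul_add]
      abel
    have e3 : A (c x)⁻¹ • σE x (ψ y) = ψ y := by
      rw [hz y, ← fσ, σ_alg, hc x, ← mul_smul, map_smul, ← mul_smul, ← map_mul, ← map_mul,
        mul_comm (z y) (c x), ← mul_assoc, inv_mul_cancel₀ (hc0 x), one_mul]
      exact (map_smul f _ _).symm
    rw [e2, e3]
    abel
  have hzadd : ∀ x y : G, z (x * y) = z x + z y := by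
    intro x y
    have h1 : f (A (z (x * y)) • s₀) = f (A (z x + z y) • s₀) := by
      rw [← hz, hψadd, hz, hz, map_add, add_smul, map_add]
    exact hcancel _ _ (hf h1)
  have hz0 : ∀ x : G, z x = 0 := hhom z hzadd
  have hψ0 : ∀ x : G, σE x e₀ = A (c x) • e₀ := by
    intro x
    have h1 : ψ x = 0 := by rw [hz x, hz0 x, map_zero, zero_smul, map_zero]
    have h2 : A (c x)⁻¹ • σE x e₀ = e₀ := by
      have h3 : A (c x)⁻¹ • σE x e₀ - e₀ = 0 := h1
      rw [sub_eq_zero] at h3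
      exact h3
    calc σE x e₀ = (A (c x) * A (c x)⁻¹) • σE x e₀ := by
          rw [← map_mul, mul_inv_cancel₀ (hc0 x), map_one, one_smul]
      _ = A (c x) • e₀ := by rw [mul_smul, h2]
  have hmain : ∀ (r : MonoidAlgebra k G) (s : S),
      A (coord (r • s)) • e₀ = r • (A (coord s) • e₀) := by
    intro r
    induction r using MonoidAlgebra.induction_on with
    | of x =>
      intro s
      have h1 : (of k G x) • s = σ x s := rfl
      have h2 : (of k G x) • (A (coord s) • e₀) = σE x (A (coord s) • e₀) := rfl
      rw [h1, h2, coord_sigma, σE_alg, hψ0, ← mul_smul, ← map_mul]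
    | add r₁ r₂ ih₁ ih₂ =>
      intro s
      rw [add_smul, coord_add, map_add, add_smul, ih₁, ih₂, ← add_smul]
    | smul t r ih =>
      intro s
      have h1 : (t • r) • s = A t • (r • s) := by rw [Algebra.smul_def, mul_smul]
      have h2 : (t • r) • (A (coord s) • e₀) = A t • (r • (A (coord s) • e₀)) := by
        rw [Algebra.smul_def, mul_smul]
      rw [h1, h2, coord_smul, map_mul, mul_smul, ih]
  refine ⟨{ toFun := fun s => A (coord s) • e₀
            map_add' := fun s t => by rw [coord_add, map_add, add_smul]
            map_smul' := fun r s => by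
              rw [RingHom.id_apply]
              exact hmain r s }, ?_⟩
  apply LinearMap.ext
  intro s
  show g (A (coord s) • e₀) = s
  rw [g.map_smul, he₀, hcoord]

/-- Let `k` be an algebraically closed field of characteristic `p > 0`, `P` a finite
`p`-group, `H` a finite abelian `p'`-group acting on `P` with `C_P(H) = 1`, and
`G := P ⋊ H`. Then for every simple `kG`-module `S`, every short exact sequence of
`kG`-modules `0 → S → E → S → 0` splits; that is, `Ext¹_{kG}(S, S) = 0`. -/
theorem stmt9 (k : Type) [Field k] [IsAlgClosed k] (p : ℕ) [Fact p.Prime] (hchar : CharP k p)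
    (P H : Type) [Group P] [CommGroup H] [Fintype P] [Fintype H]
    (hP : IsPGroup p P) (hH : (Nat.card H).Coprime p)
    (φ : H →* MulAut P)
    (hfix : ∀ x : P, (∀ h : H, φ h x = x) → x = 1)
    (S : Type) [AddCommGroup S] [Module (MonoidAlgebra k (P ⋊[φ] H)) S]
    (hS : IsSimpleModule (MonoidAlgebra k (P ⋊[φ] H)) S)
    (E : Type) [AddCommGroup E] [Module (MonoidAlgebra k (P ⋊[φ] H)) E]
    (f : S →ₗ[MonoidAlgebra k (P ⋊[φ] H)] E) (g : E →ₗ[MonoidAlgebra k (P ⋊[φ] H)] S)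
    (hf : Function.Injective f) (hg : Function.Surjective g)
    (hfg : LinearMap.range f = LinearMap.ker g) :
    ∃ h : S →ₗ[MonoidAlgebra k (P ⋊[φ] H)] E, g ∘ₗ h = LinearMap.id := by
  haveI : Finite (P ⋊[φ] H) := by
    apply Finite.of_injective (fun x : P ⋊[φ] H => (x.left, x.right))
    intro a b hab
    have h1 : a.left = b.left := congrArg Prod.fst hab
    have h2 : a.right = b.right := congrArg Prod.snd hab
    cases a; cases b
    simp only at h1 h2
    rw [h1, h2]
  set N : Subgroup (P ⋊[φ] H) := (SemidirectProduct.inl : P →* P ⋊[φ] H).range with hN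
  haveI hNnorm : N.Normal := by
    rw [hN, SemidirectProduct.range_inl_eq_ker_rightHom]
    exact MonoidHom.normal_ker _
  have hNp : IsPGroup p N :=
    hP.of_surjective (SemidirectProduct.inl : P →* P ⋊[φ] H).rangeRestrict
      (SemidirectProduct.inl : P →* P ⋊[φ] H).rangeRestrict_surjective
  have hcomm : ∀ x y : P ⋊[φ] H, x * y * x⁻¹ * y⁻¹ ∈ N := by
    intro x y
    rw [hN, SemidirectProduct.range_inl_eq_ker_rightHom, MonoidHom.mem_ker]
    simp only [map_mul, map_inv]
    rw [mul_comm (SemidirectProduct.rightHom x) (SemidirectProduct.rightHom y)]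
    group
  have hhom : ∀ z : P ⋊[φ] H → k, (∀ x y, z (x * y) = z x + z y) → ∀ x, z x = 0 :=
    fun z hz => aux_homtriv k p hchar hP hH φ hfix z hz
  exact aux_rep k p hchar (P ⋊[φ] H) N hNp hcomm hhom S hS E f g hf hg hfg
end

section
/- Let p be a prime, P a finite p-group, H a finite abelian p'-group acting on P with C_P(H) = 1, and G := P ⋊ H. Then G has no normal subgroup of index p. -/
/-- Restrict an action to an invariant subgroup. -/
def restrictAction {P H : Type*} [Group P] [Group H] (φ : H →* MulAut P) (K : Subgroup P)
    (hK : ∀ (h : H) (x : P), x ∈ K → φ h x ∈ K) : H →* MulAut K where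
  toFun h :=
    { toFun := fun x => ⟨φ h x, hK h x x.2⟩
      invFun := fun x => ⟨φ h⁻¹ x, hK h⁻¹ x x.2⟩
      left_inv := fun x => Subtype.ext (by simp [map_inv, MulAut.inv_def])
      right_inv := fun x => Subtype.ext (by simp [map_inv, MulAut.inv_def])
      map_mul' := fun x y => Subtype.ext (by simp) }
  map_one' := by ext x; simp
  map_mul' a b := by ext x; simp [MulAut.mul_apply]

@[simp] lemma restrictAction_coe {P H : Type*} [Group P] [Group H] (φ : H →* MulAut P)
    (K : Subgroup P) (hK : ∀ (h : H) (x : P), x ∈ K → φ h x ∈ K) (h : H) (x : K) :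
    (restrictAction φ K hK h x : P) = φ h x := rfl

/-- The induced action on a quotient by an invariant normal subgroup. -/
def quotAction {M H : Type*} [Group M] [Group H] (ψ : H →* MulAut M) (K : Subgroup M) [K.Normal]
    (hK : ∀ h : H, K.map (ψ h).toMonoidHom = K) : H →* MulAut (M ⧸ K) where
  toFun h := QuotientGroup.congr K K (ψ h) (hK h)
  map_one' := by
    ext q
    induction q using QuotientGroup.induction_on with
    | _ x => simp [QuotientGroup.congr_mk]
  map_mul' a b := by
    ext q
    induction q using QuotientGroup.induction_on with
    | _ x => simp [QuotientGroup.congr_mk, MulAut.mul_apply]; rfl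

@[simp] lemma quotAction_mk {M H : Type*} [Group M] [Group H] (ψ : H →* MulAut M)
    (K : Subgroup M) [K.Normal] (hK : ∀ h : H, K.map (ψ h).toMonoidHom = K) (h : H) (x : M) :
    quotAction ψ K hK h (QuotientGroup.mk x) = QuotientGroup.mk (ψ h x) := rfl

lemma keyComm {H M : Type*} [Group H] [Fintype H] [CommGroup M] [Finite M]
    (hcop : (Nat.card H).Coprime (Nat.card M))
    (ψ : H →* MulAut M) (g : H → M) (hg : ∀ a b, g (a * b) = g a * ψ a (g b)) :
    ∃ m : M, ∀ h, g h = m * (ψ h m)⁻¹ := by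
  rcases eq_or_ne (Nat.card M) 1 with h1 | h1
  · have : Subsingleton M := Nat.card_eq_one_iff_unique.mp h1 |>.1
    exact ⟨1, fun h => Subsingleton.elim _ _⟩
  · have hM1 : 1 < Nat.card M := by
      have := Nat.card_pos (α := M); omega
    obtain ⟨t, -, ht0⟩ := Nat.exists_mul_mod_eq_one_of_coprime hcop hM1
    have ht : Nat.card H * t ≡ 1 [MOD Nat.card M] := by
      unfold Nat.ModEq
      rw [ht0, Nat.mod_eq_of_lt hM1]
    set n := Nat.card H with hn
    have hpow : ∀ x : M, x ^ (n * t) = x := by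
      intro x
      have h' : n * t ≡ 1 [MOD orderOf x] := ht.of_dvd (orderOf_dvd_natCard x)
      simpa using pow_eq_pow_iff_modEq.mpr h'
    set S : M := ∏ h : H, g h with hSdef
    have hS : ∀ a : H, S = g a ^ n * ψ a S := by
      intro a
      have h1 : ∏ h : H, g (a * h) = S := by
        exact Fintype.prod_bijective (fun h => a * h) (Group.mulLeft_bijective a)
          (fun h => g (a * h)) g (fun x => rfl)
      calc S = ∏ h : H, g (a * h) := h1.symm
        _ = ∏ h : H, (g a * ψ a (g h)) := by simp [hg]
        _ = g a ^ n * ψ a S := by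
            rw [Finset.prod_mul_distrib, Finset.prod_const, hSdef, map_prod]
            simp [hn, Nat.card_eq_fintype_card]
    refine ⟨S ^ t, fun h => ?_⟩
    have h2 : ψ h (S ^ t) = (g h)⁻¹ * S ^ t := by
      have h3 : ψ h S = (g h ^ n)⁻¹ * S := by
        rw [eq_inv_mul_iff_mul_eq]; exact (hS h).symm
      rw [map_pow, h3, mul_pow, inv_pow, ← pow_mul, hpow]
    rw [h2]
    group

lemma keyP {H : Type*} [Group H] [Fintype H] (p : ℕ) [Fact p.Prime] :
    ∀ (k : ℕ) (M : Type) (_ : Group M) (_ : Finite M), Nat.card M ≤ k → IsPGroup p M →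
      (Nat.card H).Coprime (Nat.card M) →
      ∀ (ψ : H →* MulAut M) (g : H → M), (∀ a b, g (a * b) = g a * ψ a (g b)) →
      ∃ m : M, ∀ h, g h = m * (ψ h m)⁻¹ := by
  intro k
  induction k using Nat.strong_induction_on with
  | _ k IH =>
    intro M _ _ hcard hM hcop ψ g hg
    rcases subsingleton_or_nontrivial M with hs | hnt
    · exact ⟨1, fun h => Subsingleton.elim _ _⟩
    set Z := Subgroup.center M with hZdef
    have hZchar : ∀ h : H, Z.map (ψ h).toMonoidHom = Z := fun h =>
      Subgroup.characteristic_iff_map_eq.mp inferInstance (ψ h)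
    have hZnt : Nontrivial Z := hM.center_nontrivial
    have hcardZ : 1 < Nat.card Z := Finite.one_lt_card_iff_nontrivial.mpr hZnt
    have hprod : Nat.card M = Nat.card (M ⧸ Z) * Nat.card Z :=
      Subgroup.card_eq_card_quotient_mul_card_subgroup Z
    have hqpos : 0 < Nat.card (M ⧸ Z) := Nat.card_pos
    have hqlt : Nat.card (M ⧸ Z) < Nat.card M := by
      rw [hprod]
      nlinarith
    -- induced action and cocycle on the quotient
    let ψq := quotAction ψ Z hZchar
    have hcopq : (Nat.card H).Coprime (Nat.card (M ⧸ Z)) :=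
      Nat.Coprime.coprime_dvd_right ⟨Nat.card Z, hprod⟩ hcop
    have hgq : ∀ a b : H, (↑(g (a * b)) : M ⧸ Z) = ↑(g a) * ψq a (↑(g b)) := by
      intro a b
      rw [hg a b]
      rfl
    obtain ⟨mbar, hmbar⟩ := IH (Nat.card (M ⧸ Z)) (lt_of_lt_of_le hqlt hcard) (M ⧸ Z)
      inferInstance inferInstance le_rfl (hM.to_quotient Z) hcopq ψq
      (fun h => ↑(g h)) hgq
    obtain ⟨m, rfl⟩ := QuotientGroup.mk_surjective mbar
    -- the corrected cocycle has values in the center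
    have hginZ : ∀ h : H, m⁻¹ * g h * ψ h m ∈ Z := by
      intro h
      rw [← QuotientGroup.eq_one_iff]
      have : ((m⁻¹ * g h * ψ h m : M) : M ⧸ Z)
          = (↑m)⁻¹ * ↑(g h) * ψq h (↑m) := rfl
      rw [this, hmbar h]
      group
    have hZinv : ∀ (h : H) (x : M), x ∈ Z → ψ h x ∈ Z := by
      intro h x hx
      have : ψ h x ∈ Z.map (ψ h).toMonoidHom := Subgroup.mem_map_of_mem _ hx
      rwa [hZchar h] at this
    let ψZ := restrictAction ψ Z hZinv
    let g' : H → Z := fun h => ⟨m⁻¹ * g h * ψ h m, hginZ h⟩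
    have hg' : ∀ a b, g' (a * b) = g' a * ψZ a (g' b) := by
      intro a b
      apply Subtype.ext
      show m⁻¹ * g (a * b) * ψ (a * b) m
        = (m⁻¹ * g a * ψ a m) * ψ a (m⁻¹ * g b * ψ b m)
      rw [hg a b]
      simp only [map_mul, map_inv, MulAut.mul_apply]
      group
    have hcopZ : (Nat.card H).Coprime (Nat.card Z) :=
      Nat.Coprime.coprime_dvd_right (Subgroup.card_subgroup_dvd_card Z) hcop
    letI : CommGroup Z := { (inferInstance : Group Z) with
      mul_comm := fun a b => Subtype.ext (Subgroup.mem_center_iff.mp b.2 a) }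
    obtain ⟨z, hz⟩ := keyComm hcopZ ψZ g' hg'
    refine ⟨m * (z : M), fun h => ?_⟩
    have hzval : m⁻¹ * g h * ψ h m = (z : M) * (ψ h (z : M))⁻¹ := by
      have := congrArg (Subtype.val) (hz h)
      simpa [g', ψZ] using this
    have : g h = m * ((z : M) * (ψ h (z : M))⁻¹) * (ψ h m)⁻¹ := by
      rw [← hzval]; group
    rw [this, map_mul]
    group

/-- Let `p` be a prime, `P` a finite `p`-group, `H` a finite abelian `p'`-group acting on
`P` with `C_P(H) = 1`, and `G := P ⋊ H`. Then `G` has no normal subgroup of index `p`. -/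
theorem stmt10 (p : ℕ) [Fact p.Prime]
    (P H : Type) [Group P] [CommGroup H] [Fintype P] [Fintype H]
    (hP : IsPGroup p P) (hH : (Nat.card H).Coprime p)
    (φ : H →* MulAut P)
    (hfix : ∀ x : P, (∀ h : H, φ h x = x) → x = 1) :
    ∀ N : Subgroup (P ⋊[φ] H), N.Normal → N.index ≠ p := by
  intro N hN hidx
  haveI := hN
  have hp : p.Prime := Fact.out
  set π := QuotientGroup.mk' N with hπdef
  have hcardQ : Nat.card ((P ⋊[φ] H) ⧸ N) = p := hidx
  -- H dies in the quotient
  have hπH : ∀ h : H, π (SemidirectProduct.inr h) = 1 := by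
    intro h
    have h1 : orderOf (π (SemidirectProduct.inr h)) ∣ Nat.card H := by
      refine dvd_trans (orderOf_map_dvd π _) ?_
      rw [orderOf_injective SemidirectProduct.inr SemidirectProduct.inr_injective]
      exact orderOf_dvd_natCard h
    have h2 : orderOf (π (SemidirectProduct.inr h)) ∣ p := by
      rw [← hcardQ]; exact orderOf_dvd_natCard _
    have h3 : orderOf (π (SemidirectProduct.inr h)) ∣ 1 := hH ▸ Nat.dvd_gcd h1 h2
    exact orderOf_eq_one_iff.mp (Nat.dvd_one.mp h3)
  set f := π.comp SemidirectProduct.inl with hfdef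
  -- f is H-invariant
  have hfH : ∀ (h : H) (x : P), f (φ h x) = f x := by
    intro h x
    show π (SemidirectProduct.inl (φ h x)) = π (SemidirectProduct.inl x)
    rw [SemidirectProduct.inl_aut]
    simp [map_mul, hπH]
  -- f is nontrivial somewhere
  obtain ⟨x₀, hx₀⟩ : ∃ x : P, f x ≠ 1 := by
    by_contra hcon
    push_neg at hcon
    have hall : ∀ q : (P ⋊[φ] H) ⧸ N, q = 1 := by
      intro q
      obtain ⟨x, rfl⟩ := QuotientGroup.mk'_surjective N q
      rw [← SemidirectProduct.inl_left_mul_inr_right x, map_mul]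
      rw [show π (SemidirectProduct.inl x.left) = 1 from hcon x.left, hπH, one_mul]
    have hone : Nat.card ((P ⋊[φ] H) ⧸ N) = 1 :=
      Nat.card_eq_one_iff_unique.mpr ⟨⟨fun a b => by rw [hall a, hall b]⟩, ⟨1⟩⟩
    have := hp.two_le
    omega
  -- the kernel of f is an H-invariant subgroup
  set M := f.ker with hMdef
  have hMinv : ∀ (h : H) (x : P), x ∈ M → φ h x ∈ M := by
    intro h x hx
    rw [MonoidHom.mem_ker] at hx ⊢
    rw [hfH h x, hx]
  set ψ := restrictAction φ M hMinv with hψdef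
  -- the cocycle h ↦ x₀⁻¹ * φ h x₀ with values in M
  have hgmem : ∀ h : H, x₀⁻¹ * φ h x₀ ∈ M := by
    intro h
    rw [MonoidHom.mem_ker, map_mul, map_inv, hfH h x₀, inv_mul_cancel]
  set g : H → M := fun h => ⟨x₀⁻¹ * φ h x₀, hgmem h⟩ with hgdef
  have hg : ∀ a b, g (a * b) = g a * ψ a (g b) := by
    intro a b
    apply Subtype.ext
    show x₀⁻¹ * φ (a * b) x₀ = (x₀⁻¹ * φ a x₀) * φ a (x₀⁻¹ * φ b x₀)
    simp only [map_mul, map_inv, MulAut.mul_apply]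
    group
  -- coprimality
  have hMp : IsPGroup p M := hP.to_subgroup M
  obtain ⟨n, hn⟩ := IsPGroup.iff_card.mp hMp
  have hcop : (Nat.card H).Coprime (Nat.card M) := by
    rw [hn]; exact Nat.Coprime.pow_right n hH
  -- apply the vanishing of H¹
  obtain ⟨m, hm⟩ := keyP p (Nat.card M) M inferInstance inferInstance le_rfl hMp hcop ψ g hg
  -- x₀ * m is a fixed point of the action
  have hfixpt : ∀ h : H, φ h (x₀ * (m : P)) = x₀ * (m : P) := by
    intro h
    have hmv : x₀⁻¹ * φ h x₀ = (m : P) * (φ h (m : P))⁻¹ := by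
      have := congrArg Subtype.val (hm h)
      simpa [hgdef, hψdef] using this
    have hφx₀ : φ h x₀ = x₀ * ((m : P) * (φ h (m : P))⁻¹) := by
      rw [← hmv]; group
    rw [map_mul, hφx₀]
    group
  have hy : x₀ * (m : P) = 1 := hfix _ hfixpt
  have hx₀m : x₀ = ((m : P))⁻¹ := by
    rw [eq_inv_iff_mul_eq_one]; exact hy
  have : f x₀ = 1 := by
    rw [hx₀m, map_inv, MonoidHom.mem_ker.mp m.2, inv_one]
  exact hx₀ this
end

section
/- Let p be a prime, P a finite p-group, H a finite abelian p'-group acting on P with C_P(H) = 1, and G := P ⋊ H. Then the commutator subgroup of G equals P; i.e., ⁅G,G⁆ = P as subgroups of G. -/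
open Subgroup
open scoped commutatorElement

/-- Coset fixed-point lemma for coprime abelian actions on finite `p`-groups:
every invariant coset of an invariant subgroup contains a fixed point. -/
theorem aux_coset_fixed (p : ℕ) [Fact p.Prime] :
    ∀ (n : ℕ) (H : Type) [CommGroup H] [Fintype H], Nat.card H ≤ n →
    ∀ (P : Type) [Group P] [Fintype P], IsPGroup p P → (Nat.card H).Coprime p →
    ∀ (φ : H →* MulAut P) (N : Subgroup P), (∀ (h : H) (z : P), z ∈ N → φ h z ∈ N) →
    ∀ x : P, (∀ h : H, x⁻¹ * φ h x ∈ N) →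
    ∃ y : P, (∀ h : H, φ h y = y) ∧ x⁻¹ * y ∈ N := by
  intro n
  induction n with
  | zero =>
    intro H _ _ hc
    have : 0 < Nat.card H := Nat.card_pos
    omega
  | succ n ih =>
    intro H _ _ hcard P _ _ hP hcop φ N hN x hx
    by_cases hH1 : Nat.card H = 1
    · have hsub : Subsingleton H := (Nat.card_eq_one_iff_unique.mp hH1).1
      refine ⟨x, fun h => ?_, by simpa using one_mem N⟩
      have : h = 1 := Subsingleton.elim _ _
      rw [this, map_one]; rfl
    · obtain ⟨q, hq, hqdvd⟩ := Nat.exists_prime_and_dvd hH1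
      haveI : Fact q.Prime := ⟨hq⟩
      obtain ⟨h₀, hh₀⟩ := exists_prime_orderOf_dvd_card (G := H) q
        (by rwa [← Nat.card_eq_fintype_card])
      set Q : Subgroup H := Subgroup.zpowers h₀ with hQdef
      have hQcard : Nat.card Q = q := by rw [hQdef, Nat.card_zpowers, hh₀]
      have hq_ne : ∀ {m : ℕ}, q ∣ p ^ m → False := by
        intro m hdvd
        have h1 : q ∣ p := hq.dvd_of_dvd_pow hdvd
        have h2 : q.Coprime p := Nat.Coprime.coprime_dvd_left hqdvd hcop
        have h3 : q ∣ Nat.gcd q p := Nat.dvd_gcd dvd_rfl h1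
        rw [Nat.coprime_iff_gcd_eq_one.mp h2] at h3
        exact hq.one_lt.ne' (Nat.eq_one_of_dvd_one h3)
      -- the coset as a type
      let S := {z : P // x⁻¹ * z ∈ N}
      have hmemS : ∀ (h : H) (z : S), x⁻¹ * φ h (z : P) ∈ N := by
        intro h z
        have heq : x⁻¹ * φ h (z : P) = (x⁻¹ * φ h x) * (φ h (x⁻¹ * (z : P))) := by
          rw [map_mul, map_inv]; group
        rw [heq]
        exact mul_mem (hx h) (hN h _ z.2)
      letI : MulAction Q S :=
        { smul := fun g z => ⟨φ (g : H) (z : P), hmemS _ z⟩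
          one_smul := fun z => Subtype.ext (by
            show φ ((1 : Q) : H) (z : P) = (z : P)
            rw [Subgroup.coe_one, map_one]; rfl)
          mul_smul := fun a b z => Subtype.ext (by
            show φ ((a * b : Q) : H) (z : P) = φ (a : H) (φ (b : H) (z : P))
            rw [Subgroup.coe_mul, map_mul]; rfl) }
      have hQpg : IsPGroup q Q := IsPGroup.of_card (n := 1) (by rw [hQcard, pow_one])
      have hcardS : Nat.card S = Nat.card N :=
        Nat.card_congr ⟨fun z => ⟨x⁻¹ * (z : P), z.2⟩, fun m => ⟨x * (m : P), by
          simpa using m.2⟩, fun z => Subtype.ext (by simp), fun m => Subtype.ext (by simp)⟩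
      have hndvd : ¬ q ∣ Nat.card S := by
        rw [hcardS]
        intro hdvd
        obtain ⟨k, hk⟩ := IsPGroup.iff_card.mp (hP.to_subgroup N)
        rw [hk] at hdvd
        exact hq_ne hdvd
      obtain ⟨y₀, hy₀⟩ := hQpg.nonempty_fixed_point_of_prime_not_dvd_card S hndvd
      have hy₀fix : φ h₀ ((y₀ : S) : P) = ((y₀ : S) : P) :=
        congrArg Subtype.val (hy₀ ⟨h₀, Subgroup.mem_zpowers h₀⟩)
      -- fixed points of powers
      have hfix_inv : ∀ (e : MulAut P) (z : P), e z = z → e⁻¹ z = z := by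
        intro e z hz
        conv_lhs => rw [← hz]
        rw [← MulAut.mul_apply, inv_mul_cancel, MulAut.one_apply]
      have hCpow : ∀ (k : ℤ) (z : P), φ h₀ z = z → φ (h₀ ^ k) z = z := by
        intro k z hz
        rw [map_zpow]
        induction k using Int.induction_on with
        | zero => rw [zpow_zero, MulAut.one_apply]
        | succ i hi => rw [zpow_add_one, MulAut.mul_apply, hz, hi]
        | pred i hi => rw [zpow_sub_one, MulAut.mul_apply, hfix_inv _ _ hz, hi]
      -- the fixed-point subgroup of h₀
      let C : Subgroup P :=
        { carrier := {z : P | φ h₀ z = z}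
          one_mem' := map_one _
          mul_mem' := fun {a b} ha hb => by
            simp only [Set.mem_setOf_eq] at *
            rw [map_mul, ha, hb]
          inv_mem' := fun {a} ha => by
            simp only [Set.mem_setOf_eq] at *
            rw [map_inv, ha] }
      have hmemC : ∀ (h : H) (z : P), z ∈ C ↔ φ h z ∈ C := by
        intro h z
        have key : φ h₀ (φ h z) = φ h (φ h₀ z) := by
          rw [← MulAut.mul_apply, ← map_mul, mul_comm, map_mul, MulAut.mul_apply]
        constructor
        · intro hz
          show φ h₀ (φ h z) = φ h z
          rw [key, show φ h₀ z = z from hz]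
        · intro hz
          have h2 : φ h (φ h₀ z) = φ h z := by rw [← key]; exact hz
          exact (φ h).injective h2
      -- restriction of the action to C
      let ψfun : H → MulAut C := fun h =>
        { toFun := fun c => ⟨φ h (c : P), (hmemC h (c : P)).mp c.2⟩
          invFun := fun c => ⟨φ h⁻¹ (c : P), by
            apply (hmemC h _).mpr
            have h2 : φ h (φ h⁻¹ (c : P)) = (c : P) := by
              rw [← MulAut.mul_apply, ← map_mul, mul_inv_cancel, map_one, MulAut.one_apply]
            rw [h2]; exact c.2⟩
          left_inv := fun c => Subtype.ext (by
            show φ h⁻¹ (φ h (c : P)) = (c : P)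
            rw [← MulAut.mul_apply, ← map_mul, inv_mul_cancel, map_one, MulAut.one_apply])
          right_inv := fun c => Subtype.ext (by
            show φ h (φ h⁻¹ (c : P)) = (c : P)
            rw [← MulAut.mul_apply, ← map_mul, mul_inv_cancel, map_one, MulAut.one_apply])
          map_mul' := fun a b => Subtype.ext (map_mul (φ h) _ _) }
      have ψfun_apply : ∀ (h : H) (c : C), ((ψfun h c : C) : P) = φ h (c : P) := fun _ _ => rfl
      let ψ : H →* MulAut C :=
        { toFun := ψfun
          map_one' := by
            ext c
            show ((ψfun 1 c : C) : P) = ((c : C) : P)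
            rw [ψfun_apply, map_one, MulAut.one_apply]
          map_mul' := fun a b => by
            ext c
            show ((ψfun (a * b) c : C) : P) = ((ψfun a (ψfun b c) : C) : P)
            rw [ψfun_apply, ψfun_apply, ψfun_apply, map_mul, MulAut.mul_apply] }
      have hker : ∀ h ∈ Q, ψ h = 1 := by
        intro h hh
        obtain ⟨k, rfl⟩ := Subgroup.mem_zpowers_iff.mp hh
        ext c
        show ((ψfun (h₀ ^ k) c : C) : P) = ((c : C) : P)
        rw [ψfun_apply, hCpow k _ c.2]
      haveI : Fintype (H ⧸ Q) := Fintype.ofFinite _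
      haveI : Fintype C := Fintype.ofFinite _
      let ψ' : H ⧸ Q →* MulAut C := QuotientGroup.lift Q ψ hker
      have heq : Nat.card H = Nat.card (H ⧸ Q) * Nat.card Q :=
        Subgroup.card_eq_card_quotient_mul_card_subgroup Q
      have hcard' : Nat.card (H ⧸ Q) ≤ n := by
        have h1 : 1 ≤ Nat.card (H ⧸ Q) := Nat.card_pos
        have h2 := hq.two_le
        rw [hQcard] at heq
        nlinarith
      have hcop' : (Nat.card (H ⧸ Q)).Coprime p :=
        Nat.Coprime.coprime_dvd_left ⟨Nat.card Q, heq⟩ hcop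
      have hPC : IsPGroup p C := hP.to_subgroup C
      set N' : Subgroup C := N.subgroupOf C with hN'def
      have hN' : ∀ (h' : H ⧸ Q) (z : C), z ∈ N' → ψ' h' z ∈ N' := by
        intro h' z hz
        induction h' using QuotientGroup.induction_on with
        | _ h =>
          have h1 : ψ' (QuotientGroup.mk h) = ψ h := QuotientGroup.lift_mk' Q hker h
          rw [h1, Subgroup.mem_subgroupOf]
          show ((ψfun h z : C) : P) ∈ N
          rw [ψfun_apply]
          exact hN h _ (Subgroup.mem_subgroupOf.mp hz)
      set y₀C : C := ⟨((y₀ : S) : P), hy₀fix⟩ with hy₀Cdef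
      have hy₀N : ∀ h' : H ⧸ Q, (y₀C)⁻¹ * ψ' h' y₀C ∈ N' := by
        intro h'
        induction h' using QuotientGroup.induction_on with
        | _ h =>
          have h1 : ψ' (QuotientGroup.mk h) = ψ h := QuotientGroup.lift_mk' Q hker h
          rw [h1, Subgroup.mem_subgroupOf]
          show (((y₀C)⁻¹ * ψfun h y₀C : C) : P) ∈ N
          have h2 : (((y₀C)⁻¹ * ψfun h y₀C : C) : P)
              = ((y₀ : S) : P)⁻¹ * φ h ((y₀ : S) : P) := by
            rw [Subgroup.coe_mul, Subgroup.coe_inv, ψfun_apply]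
          rw [h2]
          have h3 := mul_mem (mul_mem (inv_mem ((y₀ : S).2)) (hx h)) (hN h _ ((y₀ : S).2))
          rwa [show (x⁻¹ * ((y₀ : S) : P))⁻¹ * (x⁻¹ * φ h x) * φ h (x⁻¹ * ((y₀ : S) : P))
              = ((y₀ : S) : P)⁻¹ * φ h ((y₀ : S) : P) from by
            rw [map_mul, map_inv]; group] at h3
      obtain ⟨y, hyfix, hyN⟩ := ih (H ⧸ Q) hcard' C hPC hcop' ψ' N' hN' y₀C hy₀N
      refine ⟨(y : P), fun h => ?_, ?_⟩
      · have h1 : ψ' (QuotientGroup.mk h) = ψ h := QuotientGroup.lift_mk' Q hker h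
        have h2 := hyfix (QuotientGroup.mk h)
        rw [h1] at h2
        exact congrArg Subtype.val h2
      · have h4 : ((y₀C)⁻¹ * y : C) ∈ N.subgroupOf C := hyN
        have h5 : ((y₀ : S) : P)⁻¹ * (y : P) ∈ N := by
          have := Subgroup.mem_subgroupOf.mp h4
          rwa [Subgroup.coe_mul, Subgroup.coe_inv] at this
        have h6 : x⁻¹ * (y : P)
            = (x⁻¹ * ((y₀ : S) : P)) * (((y₀ : S) : P)⁻¹ * (y : P)) := by group
        rw [h6]
        exact mul_mem ((y₀ : S).2) h5

/-- Let `p` be a prime, `P` a finite `p`-group, `H` a finite abelian `p'`-group acting on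
`P` with `C_P(H) = 1`, and `G := P ⋊ H`. Then the commutator subgroup of `G` equals `P`
(identified with a subgroup of `G`). -/
theorem stmt11 (p : ℕ) [Fact p.Prime]
    (P H : Type) [Group P] [CommGroup H] [Fintype P] [Fintype H]
    (hP : IsPGroup p P) (hH : (Nat.card H).Coprime p)
    (φ : H →* MulAut P)
    (hfix : ∀ x : P, (∀ h : H, φ h x = x) → x = 1) :
    commutator (P ⋊[φ] H) = SemidirectProduct.inl.range := by
  apply le_antisymm
  · rw [SemidirectProduct.range_inl_eq_ker_rightHom]
    exact Abelianization.commutator_subset_ker SemidirectProduct.rightHom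
  · intro g hg
    obtain ⟨x, rfl⟩ := MonoidHom.mem_range.mp hg
    set K : Subgroup P := (commutator (P ⋊[φ] H)).comap SemidirectProduct.inl with hKdef
    have hnormal : (commutator (P ⋊[φ] H)).Normal := by
      rw [commutator_def]; infer_instance
    have hK1 : ∀ (h : H) (z : P), z ∈ K → φ h z ∈ K := by
      intro h z hz
      have h1 : (SemidirectProduct.inl (φ h z) : P ⋊[φ] H)
          = SemidirectProduct.inr h * SemidirectProduct.inl z * (SemidirectProduct.inr h)⁻¹ := by
        rw [← map_inv, SemidirectProduct.inl_aut]
      show SemidirectProduct.inl (φ h z) ∈ commutator (P ⋊[φ] H)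
      rw [h1]
      exact hnormal.conj_mem _ hz _
    have hK2 : ∀ h : H, x⁻¹ * φ h x ∈ K := by
      intro h
      show SemidirectProduct.inl (x⁻¹ * φ h x) ∈ commutator (P ⋊[φ] H)
      have h1 : (SemidirectProduct.inl (x⁻¹ * φ h x) : P ⋊[φ] H)
          = ⁅((SemidirectProduct.inl x : P ⋊[φ] H))⁻¹, (SemidirectProduct.inr h : P ⋊[φ] H)⁆ := by
        rw [commutatorElement_def, inv_inv, map_mul, SemidirectProduct.inl_aut]
        simp [map_inv, mul_assoc]
      rw [h1, _root_.commutator_def]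
      exact Subgroup.commutator_mem_commutator (Subgroup.mem_top _) (Subgroup.mem_top _)
    obtain ⟨y, hyfix, hyK⟩ :=
      aux_coset_fixed p (Nat.card H) H le_rfl P hP hH φ K hK1 x hK2
    have hy1 : y = 1 := hfix y hyfix
    rw [hy1, mul_one] at hyK
    exact (Subgroup.inv_mem_iff K).mp hyK
end

section
/- Let p be a prime, P a finite p-group, H a finite p'-group acting on P, and G := P ⋊ H. Then: (i) ⁅P,H⁆ is a normal subgroup of G; (ii) P = C_P(H) ⊔ ⁅P,H⁆, i.e. every element of P is a product of an element of C_P(H) and an element of ⁅P,H⁆; and (iii) if P is abelian, then in addition C_P(H) ∩ ⁅P,H⁆ = 1, so P is the internal direct product of C_P(H) and ⁅P,H⁆. -/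
open Subgroup

section Glaub

variable {H : Type} [Group H] [Fintype H]

/-- Abelian base case: a fixed point in an invariant coset, via cocycle averaging. -/
lemma glaub_base {P : Type} [Group P] [Finite P]
    (φ : H → MulAut P)
    (hmul : ∀ h k x, φ (h * k) x = φ h (φ k x))
    (N : Subgroup P)
    (hφN : ∀ h x, x ∈ N → φ h x ∈ N)
    (hcomm : ∀ a b, a ∈ N → b ∈ N → a * b = b * a)
    (hcop : (Fintype.card H).Coprime (Nat.card N))
    (x : P) (hx : ∀ h, x⁻¹ * φ h x ∈ N) :
    ∃ y : P, (∀ h, φ h y = y) ∧ x⁻¹ * y ∈ N := by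
  letI : CommGroup N := { (inferInstance : Group N) with
    mul_comm := fun a b => Subtype.ext (hcomm a b a.2 b.2) }
  let ρ : H → (N →* N) := fun h =>
    { toFun := fun n => ⟨φ h n, hφN h n n.2⟩
      map_one' := Subtype.ext (by simp)
      map_mul' := fun a b => Subtype.ext (by simp) }
  let c : H → N := fun h => ⟨x⁻¹ * φ h x, hx h⟩
  have hkey : ∀ h k, c (h * k) = c h * ρ h (c k) := by
    intro h k
    apply Subtype.ext
    show x⁻¹ * φ (h*k) x = (x⁻¹ * φ h x) * φ h (x⁻¹ * φ k x)
    rw [hmul, map_mul, map_inv]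
    group
  have hkeyb : ∀ h, (∏ k : H, c k) = (c h) ^ Fintype.card H * ρ h (∏ k : H, c k) := by
    intro h
    have h1 : (∏ k : H, c k) = ∏ k : H, c (h * k) :=
      (Fintype.prod_bijective (fun k => h * k)
        (Group.mulLeft_bijective h) _ _ (fun k => rfl)).symm
    conv_lhs => rw [h1]
    simp only [hkey]
    rw [Finset.prod_mul_distrib, Finset.prod_const, Finset.card_univ,
      ← map_prod (ρ h) c Finset.univ]
  set m := Fintype.card H with hm
  set b : N := ∏ k : H, c k with hb
  set q := Nat.card N with hq
  have hqpos : 0 < q := Nat.card_pos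
  set t := m ^ (q.totient - 1) with ht
  have hmt : m * t ≡ 1 [MOD q] := by
    have h1 : m ^ q.totient ≡ 1 [MOD q] := Nat.ModEq.pow_totient hcop
    have h2 : m * t = m ^ q.totient := by
      rw [ht, ← pow_succ']
      congr 1
      have := Nat.totient_pos.mpr hqpos
      omega
    rw [h2]; exact h1
  have horder : ∀ (z : N), z ^ (m * t) = z := by
    intro z
    conv_rhs => rw [← pow_one z]
    rw [pow_eq_pow_iff_modEq]
    exact Nat.ModEq.of_dvd (orderOf_dvd_natCard z) hmt
  set nn := b ^ t with hnn
  have hch : ∀ h, c h = nn * (ρ h nn)⁻¹ := by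
    intro h
    have h1 : (c h) ^ m = b * (ρ h b)⁻¹ :=
      eq_mul_inv_iff_mul_eq.mpr (hkeyb h).symm
    calc c h = (c h) ^ (m * t) := (horder (c h)).symm
      _ = ((c h) ^ m) ^ t := pow_mul _ _ _
      _ = (b * (ρ h b)⁻¹) ^ t := by rw [h1]
      _ = b ^ t * ((ρ h b) ^ t)⁻¹ := by rw [mul_pow, inv_pow]
      _ = nn * (ρ h nn)⁻¹ := by rw [hnn, map_pow]
  refine ⟨x * (nn : P), ?_, ?_⟩
  · intro h
    have h2 : (c h * ρ h nn : N) = nn := by rw [hch h]; group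
    have h3 : φ h (x * (nn : P)) = x * ((c h : P) * ((ρ h nn : N) : P)) := by
      rw [map_mul]
      show φ h x * φ h (nn : P) = x * (x⁻¹ * φ h x * φ h (nn : P))
      group
    rw [h3, ← Subgroup.coe_mul, h2]
  · simp only [inv_mul_cancel_left]
    exact nn.2

/-- A nontrivial finite `p`-subgroup is not its own commutator. -/
lemma commutator_ne_self_of_pgroup {p : ℕ} [Fact p.Prime] {P : Type} [Group P] [Finite P]
    (N : Subgroup P) (hN : IsPGroup p N) (hbot : N ≠ ⊥) : ⁅N, N⁆ ≠ N := by
  intro hc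
  haveI : Group.IsNilpotent N := hN.isNilpotent
  have htop : ⁅(⊤ : Subgroup N), (⊤ : Subgroup N)⁆ = (⊤ : Subgroup N) := by
    apply Subgroup.map_injective N.subtype_injective
    rw [Subgroup.map_commutator]
    have h1 : Subgroup.map N.subtype ⊤ = N := by
      rw [← MonoidHom.range_eq_map, N.range_subtype]
    rw [h1, hc]
  have hlcs : ∀ n, (⊤ : Subgroup N).lowerCentralSeries n = ⊤ := by
    intro n
    induction n with
    | zero => rfl
    | succ n ih => rw [Subgroup.lowerCentralSeries_succ, ih]; exact htop
  obtain ⟨n0, hn0⟩ := Subgroup.nilpotent_iff_lowerCentralSeries.mp (inferInstance : Group.IsNilpotent ↥N)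
  have hTB : (⊤ : Subgroup N) = ⊥ := by rw [← hn0, hlcs]
  apply hbot
  rw [eq_bot_iff]
  intro z hz
  have : (⟨z, hz⟩ : N) ∈ (⊥ : Subgroup N) := by rw [← hTB]; trivial
  simpa using congrArg Subtype.val (Subgroup.mem_bot.mp this)

/-- Fixed point in an invariant coset of an invariant normal p-subgroup, under coprime action. -/
lemma glaub {p : ℕ} [Fact p.Prime] (hHp : (Nat.card H).Coprime p) :
    ∀ (n : ℕ) (P : Type) (_ : Group P) (_ : Finite P)
      (φ : H → MulAut P) (_ : ∀ h k x, φ (h * k) x = φ h (φ k x))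
      (N : Subgroup P) (_ : N.Normal)
      (_ : ∀ h x, x ∈ N → φ h x ∈ N)
      (_ : IsPGroup p N) (_ : Nat.card N = n)
      (x : P) (_ : ∀ h, x⁻¹ * φ h x ∈ N),
      ∃ y : P, (∀ h, φ h y = y) ∧ x⁻¹ * y ∈ N := by
  intro n
  induction n using Nat.strong_induction_on with
  | _ n IH =>
  intro P instG instF φ hmul N hNnorm hφN hNp hcard x hx
  haveI := hNnorm
  obtain ⟨k0, hk0⟩ := IsPGroup.iff_card.mp hNp
  have hcop : (Fintype.card H).Coprime (Nat.card N) := by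
    rw [← Nat.card_eq_fintype_card, hk0]
    exact Nat.Coprime.pow_right k0 hHp
  by_cases habel : ⁅N, N⁆ = ⊥
  · have hcomm : ∀ a b, a ∈ N → b ∈ N → a * b = b * a := by
      intro a b ha hb
      have h1 := Subgroup.commutator_mem_commutator ha hb
      rw [habel, Subgroup.mem_bot] at h1
      exact (commutatorElement_eq_one_iff_commute.mp h1).eq
    exact glaub_base φ hmul N hφN hcomm hcop x hx
  · set M := ⁅N, N⁆ with hM
    haveI hMnorm : M.Normal := Subgroup.commutator_normal N N
    have hMle : M ≤ N := Subgroup.commutator_le_left N N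
    have hNbot : N ≠ ⊥ := fun h => habel (le_bot_iff.mp (h ▸ hMle))
    have hMN : M ≠ N := commutator_ne_self_of_pgroup N hNp hNbot
    have hφone : ∀ z : P, φ 1 z = z := by
      intro z
      have h1 := hmul 1 1 z
      rw [one_mul] at h1
      exact ((φ 1).injective h1.symm)
    have hmapN : ∀ h : H, N.map (φ h).toMonoidHom ≤ N := by
      rintro h _ ⟨a, ha, rfl⟩; exact hφN h a ha
    have hmapM : ∀ h : H, M.map (φ h).toMonoidHom ≤ M := by
      intro h
      calc M.map (φ h).toMonoidHom
          = ⁅N.map (φ h).toMonoidHom, N.map (φ h).toMonoidHom⁆ :=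
            Subgroup.map_commutator N N _
        _ ≤ ⁅N, N⁆ := Subgroup.commutator_mono (hmapN h) (hmapN h)
    have hφM : ∀ (h : H) (z : P), z ∈ M → φ h z ∈ M := by
      intro h z hz; exact hmapM h ⟨z, hz, rfl⟩
    have hMp : IsPGroup p M := by
      intro g
      obtain ⟨k, hk⟩ := hNp ⟨g.1, hMle g.2⟩
      refine ⟨k, ?_⟩
      apply Subtype.ext
      simpa using congrArg Subtype.val hk
    have hMcard : Nat.card M < n := by
      rw [← hcard]
      refine lt_of_le_of_ne (Nat.le_of_dvd Nat.card_pos (Subgroup.card_dvd_of_le hMle)) ?_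
      intro hEq
      exact hMN (Subgroup.eq_of_le_of_card_ge hMle (le_of_eq hEq.symm))
    -- the quotient action
    have hMeq : ∀ h : H, M.map ((φ h : P ≃* P) : P →* P) = M := by
      intro h
      refine le_antisymm (hmapM h) ?_
      intro z hz
      exact ⟨φ h⁻¹ z, hφM h⁻¹ z hz, by
        show φ h (φ h⁻¹ z) = z
        rw [← hmul, mul_inv_cancel, hφone]⟩
    let ψ : H → MulAut (P ⧸ M) := fun h => QuotientGroup.congr M M (φ h) (hMeq h)
    have hψmk : ∀ (h : H) (z : P), ψ h (QuotientGroup.mk z) = QuotientGroup.mk (φ h z) :=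
      fun h z => rfl
    have hψmul : ∀ h k q, ψ (h * k) q = ψ h (ψ k q) := by
      intro h k q
      induction q using QuotientGroup.induction_on with
      | H z => rw [hψmk, hψmk, hψmk, hmul]
    set N' := N.map (QuotientGroup.mk' M) with hN'
    haveI hN'norm : N'.Normal := Subgroup.Normal.map hNnorm _ (QuotientGroup.mk'_surjective M)
    have hφN' : ∀ (h : H) (q : P ⧸ M), q ∈ N' → ψ h q ∈ N' := by
      rintro h _ ⟨z, hz, rfl⟩
      exact ⟨φ h z, hφN h z hz, rfl⟩
    have hN'p : IsPGroup p N' := by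
      intro g
      obtain ⟨z, hz, hzz⟩ := g.2
      obtain ⟨k, hk⟩ := hNp ⟨z, hz⟩
      refine ⟨k, ?_⟩
      apply Subtype.ext
      have hzk : z ^ (p ^ k) = 1 := by simpa using congrArg Subtype.val hk
      calc (g : P ⧸ M) ^ p ^ k = (QuotientGroup.mk' M z) ^ p ^ k := by rw [hzz]
        _ = QuotientGroup.mk' M (z ^ p ^ k) := by rw [map_pow]
        _ = 1 := by rw [hzk, map_one]
    -- cardinality drop
    let g0 : N →* P ⧸ M := (QuotientGroup.mk' M).comp N.subtype
    have hrange : g0.range = N' := by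
      rw [MonoidHom.range_comp, N.range_subtype]
    have hkerbot : g0.ker ≠ ⊥ := by
      obtain ⟨a, ha⟩ := Subgroup.ne_bot_iff_exists_ne_one.mp habel
      rw [Subgroup.ne_bot_iff_exists_ne_one]
      refine ⟨⟨⟨a.1, hMle a.2⟩, ?_⟩, ?_⟩
      · show g0 ⟨a.1, hMle a.2⟩ = 1
        show QuotientGroup.mk' M a.1 = 1
        rw [QuotientGroup.mk'_apply, QuotientGroup.eq_one_iff]
        exact a.2
      · intro hcon
        apply ha
        apply Subtype.ext
        have := congrArg Subtype.val hcon
        simpa using congrArg Subtype.val this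
    have hcardker : 1 < Nat.card g0.ker := (Subgroup.one_lt_card_iff_ne_bot _).mpr hkerbot
    have hcards : Nat.card N = Nat.card (N ⧸ g0.ker) * Nat.card g0.ker :=
      Subgroup.card_eq_card_quotient_mul_card_subgroup g0.ker
    have hcardN' : Nat.card N' = Nat.card (N ⧸ g0.ker) := by
      rw [← hrange]
      exact (Nat.card_congr (QuotientGroup.quotientKerEquivRange g0).toEquiv).symm
    have hN'card : Nat.card N' < n := by
      rw [← hcard, hcards, hcardN']
      exact (Nat.lt_mul_iff_one_lt_right Nat.card_pos).mpr hcardker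
    -- apply induction hypothesis to the quotient
    have hx' : ∀ h, (QuotientGroup.mk x : P ⧸ M)⁻¹ * ψ h (QuotientGroup.mk x) ∈ N' := by
      intro h
      rw [hψmk]
      exact ⟨x⁻¹ * φ h x, hx h, by rw [map_mul, map_inv]; rfl⟩
    obtain ⟨ybar, hyfix, hymem⟩ := IH (Nat.card N') hN'card (P ⧸ M) inferInstance inferInstance
      ψ hψmul N' hN'norm hφN' hN'p rfl (QuotientGroup.mk x) hx'
    obtain ⟨y₀, hy₀⟩ := QuotientGroup.mk_surjective ybar
    have hy₀M : ∀ h, y₀⁻¹ * φ h y₀ ∈ M := by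
      intro h
      have h1 : (QuotientGroup.mk (φ h y₀) : P ⧸ M) = QuotientGroup.mk y₀ := by
        rw [← hψmk, hy₀, hyfix h]
      exact QuotientGroup.eq.mp h1.symm
    obtain ⟨z, hzfix, hzmem⟩ := IH (Nat.card M) hMcard P instG instF φ hmul M hMnorm hφM
      hMp rfl y₀ hy₀M
    refine ⟨z, hzfix, ?_⟩
    have h1 : x⁻¹ * y₀ ∈ N := by
      have h2 : QuotientGroup.mk' M (x⁻¹ * y₀) ∈ N' := by
        have : QuotientGroup.mk' M (x⁻¹ * y₀) =
            (QuotientGroup.mk x : P ⧸ M)⁻¹ * ybar := by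
          rw [map_mul, map_inv, ← hy₀]; rfl
        rw [this]; exact hymem
      obtain ⟨w, hw, hww⟩ := h2
      have h3 : w⁻¹ * (x⁻¹ * y₀) ∈ M := QuotientGroup.eq.mp hww
      have h4 : x⁻¹ * y₀ = w * (w⁻¹ * (x⁻¹ * y₀)) := by group
      rw [h4]
      exact N.mul_mem hw (hMle h3)
    have h5 : x⁻¹ * z = (x⁻¹ * y₀) * (y₀⁻¹ * z) := by group
    rw [h5]
    exact N.mul_mem h1 (hMle hzmem)

end Glaub

/-- The fixed-point subgroup `C_P(H) = {x ∈ P | φ h x = x for all h ∈ H}` of an action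
`φ : H →* MulAut P`. -/
def fixedSubgroup {P H : Type*} [Group P] [Group H] (φ : H →* MulAut P) : Subgroup P where
  carrier := {x : P | ∀ h : H, φ h x = x}
  one_mem' := fun h => map_one (φ h)
  mul_mem' := fun {a b} ha hb h => by rw [map_mul, ha h, hb h]
  inv_mem' := fun {a} ha h => by rw [map_inv, ha h]

section CSub

variable {P H : Type} [Group P] [Group H] (φ : H →* MulAut P)

/-- The subgroup of `P` corresponding to `⁅P, H⁆` inside `P ⋊[φ] H`. -/
def cSub : Subgroup P :=
  Subgroup.closure {y : P | ∃ (x : P) (h : H), y = x * φ h x⁻¹}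

lemma cSub_gen_mem (x : P) (h : H) : x * φ h x⁻¹ ∈ cSub φ :=
  Subgroup.subset_closure ⟨x, h, rfl⟩

lemma cSub_gen_mem' (x : P) (h : H) : x⁻¹ * φ h x ∈ cSub φ := by
  have := cSub_gen_mem φ x⁻¹ h
  simpa using this

lemma cSub_normal : (cSub φ).Normal := by
  constructor
  intro n hn g
  have hle : (cSub φ).map (MulAut.conj g).toMonoidHom ≤ cSub φ := by
    rw [cSub, MonoidHom.map_closure, Subgroup.closure_le]
    rintro _ ⟨_, ⟨x, h, rfl⟩, rfl⟩
    have heq : (MulAut.conj g).toMonoidHom (x * φ h x⁻¹) =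
        ((g * x) * φ h (g * x)⁻¹) * (g * φ h g⁻¹)⁻¹ := by
      show g * (x * φ h x⁻¹) * g⁻¹ = g * x * φ h (g * x)⁻¹ * (g * φ h g⁻¹)⁻¹
      rw [mul_inv_rev, map_mul, map_inv, map_inv]
      group
    rw [heq]
    exact (cSub φ).mul_mem (cSub_gen_mem φ _ _) ((cSub φ).inv_mem (cSub_gen_mem φ _ _))
  exact hle ⟨n, hn, rfl⟩

lemma cSub_inv (h : H) (x : P) (hx : x ∈ cSub φ) : φ h x ∈ cSub φ := by
  have hle : (cSub φ).map (φ h).toMonoidHom ≤ cSub φ := by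
    rw [cSub, MonoidHom.map_closure, Subgroup.closure_le]
    rintro _ ⟨_, ⟨x, k, rfl⟩, rfl⟩
    have e1 : ∀ (a b : H) (z : P), φ a (φ b z) = φ (a * b) z := by
      intro a b z; rw [map_mul]; rfl
    have heq : (φ h).toMonoidHom (x * φ k x⁻¹) =
        (φ h x) * φ (h * k * h⁻¹) (φ h x)⁻¹ := by
      show φ h (x * φ k x⁻¹) = φ h x * φ (h * k * h⁻¹) (φ h x)⁻¹
      rw [map_mul (φ h)]
      congr 1
      rw [← map_inv (φ h) x, e1, e1]
      have : h * k * h⁻¹ * h = h * k := by group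
      rw [this]
    rw [heq]
    exact cSub_gen_mem φ _ _
  exact hle ⟨x, hx, rfl⟩

open SemidirectProduct commutatorElement in
lemma cSub_eq_commutator :
    ⁅(SemidirectProduct.inl.range : Subgroup (P ⋊[φ] H)),
      (SemidirectProduct.inr.range : Subgroup (P ⋊[φ] H))⁆ = (cSub φ).map inl := by
  have key : ∀ (x : P) (h : H),
      (inl (x * φ h x⁻¹) : P ⋊[φ] H) = ⁅(inl x : P ⋊[φ] H), inr h⁆ := by
    intro x h
    rw [commutatorElement_def, map_mul, inl_aut]
    simp only [map_inv]
    group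
  rw [Subgroup.commutator_def, cSub, MonoidHom.map_closure]
  congr 1
  ext z
  constructor
  · rintro ⟨_, ⟨x, rfl⟩, _, ⟨h, rfl⟩, rfl⟩
    exact ⟨x * φ h x⁻¹, ⟨x, h, rfl⟩, key x h⟩
  · rintro ⟨_, ⟨x, h, rfl⟩, rfl⟩
    exact ⟨inl x, ⟨x, rfl⟩, inr h, ⟨h, rfl⟩, (key x h).symm⟩

end CSub

/-- Let `p` be a prime, `P` a finite `p`-group, `H` a finite `p'`-group acting on `P`, and
`G := P ⋊ H` (with `P`, `H`, `C_P(H)` identified with subgroups of `G`). Then: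
(i) `⁅P, H⁆` is a normal subgroup of `G`;
(ii) `P = C_P(H) ⊔ ⁅P, H⁆`, and indeed every element of `P` is a product of an element of
`C_P(H)` and an element of `⁅P, H⁆`;
(iii) if `P` is abelian, then moreover `C_P(H) ∩ ⁅P, H⁆ = 1`. -/
theorem stmt12 (p : ℕ) [Fact p.Prime]
    (P H : Type) [Group P] [Group H] [Fintype P] [Fintype H]
    (hP : IsPGroup p P) (hH : (Nat.card H).Coprime p)
    (φ : H →* MulAut P) :
    (⁅(SemidirectProduct.inl.range : Subgroup (P ⋊[φ] H)),
        (SemidirectProduct.inr.range : Subgroup (P ⋊[φ] H))⁆).Normal ∧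
    (SemidirectProduct.inl.range : Subgroup (P ⋊[φ] H)) =
      (fixedSubgroup φ).map SemidirectProduct.inl ⊔
        ⁅(SemidirectProduct.inl.range : Subgroup (P ⋊[φ] H)), (SemidirectProduct.inr.range : Subgroup (P ⋊[φ] H))⁆ ∧
    (∀ g ∈ (SemidirectProduct.inl.range : Subgroup (P ⋊[φ] H)),
      ∃ c ∈ (fixedSubgroup φ).map SemidirectProduct.inl,
      ∃ r ∈ ⁅(SemidirectProduct.inl.range : Subgroup (P ⋊[φ] H)),
              (SemidirectProduct.inr.range : Subgroup (P ⋊[φ] H))⁆, g = c * r) ∧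
    ((∀ a b : P, a * b = b * a) →
      (fixedSubgroup φ).map SemidirectProduct.inl ⊓
        ⁅(SemidirectProduct.inl.range : Subgroup (P ⋊[φ] H)),
          (SemidirectProduct.inr.range : Subgroup (P ⋊[φ] H))⁆ = ⊥) := by
  have hT1 := cSub_eq_commutator φ
  have hNnorm : (cSub φ).Normal := cSub_normal φ
  have hNinv := cSub_inv φ
  -- the central decomposition, from the Glauberman-type lemma
  have hmain : ∀ x : P, ∃ y : P, (∀ h, φ h y = y) ∧ x⁻¹ * y ∈ cSub φ := by
    intro x
    refine glaub hH (Nat.card (cSub φ)) P inferInstance inferInstance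
      (fun h => φ h)
      (by intro h k x
          show φ (h * k) x = φ h (φ k x)
          rw [map_mul, MulAut.mul_apply])
      (cSub φ) hNnorm (fun h x hx => hNinv h x hx) (hP.to_subgroup _) rfl x
      (fun h => cSub_gen_mem' φ x h)
  refine ⟨?_, ?_, ?_, ?_⟩
  · -- (i) normality
    rw [hT1]
    constructor
    rintro _ ⟨z, hz, rfl⟩ g
    refine ⟨g.left * φ g.right z * g.left⁻¹, ?_, ?_⟩
    · exact hNnorm.conj_mem _ (hNinv g.right z hz) _
    · ext <;> simp [SemidirectProduct.mul_left, SemidirectProduct.mul_right,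
        SemidirectProduct.inv_left, SemidirectProduct.inv_right, mul_assoc]
  · -- (ii) sup decomposition
    rw [hT1]
    apply le_antisymm
    · rintro _ ⟨x, rfl⟩
      obtain ⟨y, hyfix, hymem⟩ := hmain x
      have hxeq : (SemidirectProduct.inl x : P ⋊[φ] H) =
          SemidirectProduct.inl y * SemidirectProduct.inl (y⁻¹ * x) := by
        rw [← map_mul SemidirectProduct.inl y (y⁻¹ * x)]
        congr 1
        group
      rw [hxeq]
      refine Subgroup.mul_mem _ (Subgroup.mem_sup_left ⟨y, hyfix, rfl⟩)
        (Subgroup.mem_sup_right ⟨y⁻¹ * x, ?_, rfl⟩)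
      have := (cSub φ).inv_mem hymem
      simpa using this
    · refine sup_le ?_ ?_
      · rintro _ ⟨c, _, rfl⟩; exact ⟨c, rfl⟩
      · rintro _ ⟨z, _, rfl⟩; exact ⟨z, rfl⟩
  · -- (ii) explicit decomposition
    rintro _ ⟨x, rfl⟩
    obtain ⟨y, hyfix, hymem⟩ := hmain x
    refine ⟨SemidirectProduct.inl y, ⟨y, hyfix, rfl⟩,
      SemidirectProduct.inl (y⁻¹ * x), ?_, ?_⟩
    · rw [hT1]
      refine ⟨y⁻¹ * x, ?_, rfl⟩
      have := (cSub φ).inv_mem hymem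
      simpa using this
    · rw [← map_mul SemidirectProduct.inl y (y⁻¹ * x)]
      congr 1
      group
  · -- (iii) trivial intersection in the abelian case
    intro habel
    letI : CommGroup P := { (inferInstance : Group P) with mul_comm := habel }
    rw [hT1, eq_bot_iff]
    rintro g ⟨hg1, hg2⟩
    obtain ⟨y, hyfix, rfl⟩ := hg1
    have hy : y ∈ cSub φ := by
      obtain ⟨z, hz, hzz⟩ := hg2
      exact (SemidirectProduct.inl_injective hzz) ▸ hz
    have hθact : ∀ (h : H) (x : P), (∏ k : H, φ k (φ h x)) = ∏ k : H, φ k x := by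
      intro h x
      refine Fintype.prod_bijective (fun k => k * h) (Group.mulRight_bijective h) _ _ ?_
      intro k
      show φ k (φ h x) = φ (k * h) x
      rw [map_mul, MulAut.mul_apply]
    have hθN : ∀ w ∈ cSub φ, (∏ k : H, φ k w) = 1 := by
      intro w hw
      induction hw using Subgroup.closure_induction with
      | mem w hw =>
        obtain ⟨x, h, rfl⟩ := hw
        have h1 : (∏ k : H, φ k (x * φ h x⁻¹)) =
            (∏ k : H, φ k x) * ∏ k : H, φ k (φ h x⁻¹) := by
          simp [map_mul, Finset.prod_mul_distrib]
        have h2 : (∏ k : H, φ k (φ h x⁻¹)) = (∏ k : H, φ k x)⁻¹ := by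
          rw [hθact h x⁻¹]
          simp [map_inv, Finset.prod_inv_distrib]
        rw [h1, h2, mul_inv_cancel]
      | one => simp
      | mul a b _ _ ha hb =>
        have ha' : (∏ k : H, φ k a) = 1 := ha
        have hb' : (∏ k : H, φ k b) = 1 := hb
        show (∏ k : H, φ k (a * b)) = 1
        simp only [map_mul, Finset.prod_mul_distrib]
        rw [ha', hb', mul_one]
      | inv a _ ha =>
        have ha' : (∏ k : H, φ k a) = 1 := ha
        show (∏ k : H, φ k a⁻¹) = 1
        simp only [map_inv]
        rw [Finset.prod_inv_distrib, ha', inv_one]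
    have hym : y ^ Fintype.card H = 1 := by
      have hyfix' : ∀ h : H, φ h y = y := hyfix
      have h1 : (∏ k : H, φ k y) = y ^ Fintype.card H := by
        simp only [hyfix']
        rw [Finset.prod_const, Finset.card_univ]
      rw [← h1]
      exact hθN y hy
    have hy1 : y = 1 := by
      obtain ⟨k, hk⟩ := IsPGroup.iff_card.mp hP
      have hd1 : orderOf y ∣ Fintype.card H := orderOf_dvd_of_pow_eq_one hym
      have hd2 : orderOf y ∣ p ^ k := by rw [← hk]; exact orderOf_dvd_natCard y
      have hcop : (Fintype.card H).Coprime (p ^ k) := by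
        rw [← Nat.card_eq_fintype_card]
        exact hH.pow_right k
      have : orderOf y ∣ 1 := hcop ▸ Nat.dvd_gcd hd1 hd2
      rw [orderOf_eq_one_iff.mp (Nat.dvd_one.mp this)]
    rw [hy1, map_one]
    exact Subgroup.one_mem ⊥
end

section
/- Let P be a finite abelian 2-group and H a finite abelian group of odd order acting on P with C_P(H) = 1. Write P in its homocyclic (elementary divisor) decomposition P ≅ ∏_{i ≥ 1} (ℤ/2^i ℤ)^{t_i}, with the multiplicities t_i uniquely determined by P. Then t_i ≠ 1 for every i ≥ 1. -/
/-!
Let `L ⊆ P` consist of the elements `x` with `x ^ 2 = 1` that are `2 ^ k`-th powers but not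
`2 ^ (k + 1)`-th powers. Every automorphism preserves `L`. In `∏ j, ℤ/2^(e j)` the element
`2 ^ k` placed in a factor with `e j = k + 1` lies in `L`, and when there is only one such
factor every element of `L` has exactly that component there and is divisible by `2 ^ (k + 1)`
elsewhere, so any two elements of `L` differ by a `2 ^ (k + 1)`-th power.

For `x ∈ L` the orbit product `∏ h, h • x` is fixed by `H`, hence trivial, and it equals
`x ^ |H| = x` up to a `2 ^ (k + 1)`-th power; so `x` would itself be one.
-/

def twoTorsionLayer (P : Type*) [Monoid P] (k : ℕ) : Set P :=
  {x | x ^ 2 = 1 ∧ (∃ y, y ^ 2 ^ k = x) ∧ ¬ ∃ y, y ^ 2 ^ (k + 1) = x}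

theorem MulEquiv.exists_pow_eq_apply_iff {P Q : Type*} [Monoid P] [Monoid Q] (f : P ≃* Q)
    (n : ℕ) (x : P) : (∃ y, y ^ n = f x) ↔ ∃ y, y ^ n = x :=
  ⟨fun ⟨y, hy⟩ => ⟨f.symm y, by rw [← map_pow, hy, symm_apply_apply]⟩,
    fun ⟨y, hy⟩ => ⟨f y, by rw [← map_pow, hy]⟩⟩

theorem MulEquiv.apply_mem_twoTorsionLayer_iff {P Q : Type*} [Monoid P] [Monoid Q]
    (f : P ≃* Q) {k : ℕ} {x : P} : f x ∈ twoTorsionLayer Q k ↔ x ∈ twoTorsionLayer P k := by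
  simp only [twoTorsionLayer, Set.mem_ofPred_eq, ← map_pow, f.map_eq_one_iff,
    f.exists_pow_eq_apply_iff]

theorem prod_apply_eq_one {P H : Type*} [CommGroup P] [Group H] [Fintype H]
    (φ : H →* MulAut P) (hfix : ∀ x : P, (∀ h : H, φ h x = x) → x = 1) (x : P) :
    ∏ h : H, φ h x = 1 := by
  refine hfix _ fun g => ?_
  rw [map_prod]
  exact Fintype.prod_equiv (Equiv.mulLeft g) _ _ fun h => by simp [MulAut.mul_apply]

theorem pow_card_mem_of_forall_apply_div_mem {P H : Type*} [CommGroup P] [Group H]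
    [Fintype H] (φ : H →* MulAut P) (hfix : ∀ x : P, (∀ h : H, φ h x = x) → x = 1)
    (N : Subgroup P) {x : P} (hx : ∀ h, φ h x / x ∈ N) : x ^ Fintype.card H ∈ N := by
  have horbit : x ^ Fintype.card H * ∏ h : H, φ h x / x = 1 := by
    rw [← prod_apply_eq_one φ hfix x, ← Finset.card_univ, ← Finset.prod_const,
      ← Finset.prod_mul_distrib]
    exact Finset.prod_congr rfl fun h _ => mul_div_cancel _ _
  rw [eq_inv_of_mul_eq_one_left horbit]
  exact N.inv_mem (N.prod_mem fun h _ => hx h)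

section Pi

variable {ι : Type*} {R : ι → Type*} [∀ j, Semiring (R j)]

theorem Pi.multiplicative_pow_eq_one_iff (n : ℕ) (x : ∀ j, Multiplicative (R j)) :
    x ^ n = 1 ↔ ∀ j, (n : R j) * (x j).toAdd = 0 := by
  simp [funext_iff, ← toAdd_eq_zero, toAdd_pow, nsmul_eq_mul]

theorem Pi.multiplicative_exists_pow_eq_iff (n : ℕ) (x : ∀ j, Multiplicative (R j)) :
    (∃ y, y ^ n = x) ↔ ∀ j, (n : R j) ∣ (x j).toAdd := by
  constructor
  · rintro ⟨y, rfl⟩ j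
    exact ⟨(y j).toAdd, by simp [toAdd_pow, nsmul_eq_mul]⟩
  · intro h
    choose d hd using h
    refine ⟨fun j => .ofAdd (d j), funext fun j => Multiplicative.toAdd.injective ?_⟩
    simp [toAdd_pow, nsmul_eq_mul, hd j]

end Pi

namespace ZMod

theorem two_pow_eq_zero_iff {e n : ℕ} : (2 : ZMod (2 ^ e)) ^ n = 0 ↔ e ≤ n := by
  have hcast : ((2 ^ n : ℕ) : ZMod (2 ^ e)) = 2 ^ n := by push_cast; rfl
  rw [← hcast, natCast_eq_zero_iff, Nat.pow_dvd_pow_iff_le_right one_lt_two]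

theorem eq_zero_or_eq_two_pow_of_two_mul_eq_zero {e k : ℕ} (he : e = k + 1) {c : ZMod (2 ^ e)}
    (hc : 2 * c = 0) : c = 0 ∨ c = 2 ^ k := by
  subst he
  have hdvd : 2 ^ (k + 1) ∣ 2 * c.val := by
    rw [← natCast_eq_zero_iff]; push_cast; simpa using hc
  obtain ⟨q, hq⟩ : 2 ^ k ∣ c.val :=
    (Nat.mul_dvd_mul_iff_left two_pos).1 (by rwa [← pow_succ'])
  have hq2 : q < 2 := by
    have := c.val_lt
    rw [hq, pow_succ] at this
    exact Nat.lt_of_mul_lt_mul_left this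
  rw [← natCast_zmod_val c, hq]
  interval_cases q <;> simp

theorem two_pow_succ_dvd_of_two_mul_eq_zero {e k : ℕ} (hek : e ≠ k + 1) {c : ZMod (2 ^ e)}
    (hc : 2 * c = 0) (hdvd : 2 ^ k ∣ c) : 2 ^ (k + 1) ∣ c := by
  rcases le_or_gt e k with hle | hlt
  · rw [two_pow_eq_zero_iff.2 hle, zero_dvd_iff] at hdvd
    simp [hdvd]
  · obtain ⟨e', rfl⟩ := Nat.exists_eq_add_of_le' (show 1 ≤ e by omega)
    rcases eq_zero_or_eq_two_pow_of_two_mul_eq_zero rfl hc with rfl | rfl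
    · exact dvd_zero _
    · exact pow_dvd_pow 2 (by omega)

end ZMod

section CyclicTwoGroupProduct

variable {ι : Type*} {e : ι → ℕ} {k : ℕ}

theorem two_pow_succ_dvd_toAdd_of_mem_twoTorsionLayer
    {x : ∀ j, Multiplicative (ZMod (2 ^ e j))} (hx : x ∈ twoTorsionLayer _ k) {j : ι}
    (hj : e j ≠ k + 1) : 2 ^ (k + 1) ∣ (x j).toAdd := by
  have hsq := (Pi.multiplicative_pow_eq_one_iff 2 x).1 hx.1 j
  have hdvd := (Pi.multiplicative_exists_pow_eq_iff (2 ^ k) x).1 hx.2.1 j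
  push_cast at hsq hdvd
  exact ZMod.two_pow_succ_dvd_of_two_mul_eq_zero hj hsq hdvd

theorem toAdd_eq_two_pow_of_mem_twoTorsionLayer (hsub : {j | e j = k + 1}.Subsingleton)
    {x : ∀ j, Multiplicative (ZMod (2 ^ e j))} (hx : x ∈ twoTorsionLayer _ k) {j : ι}
    (hj : e j = k + 1) : (x j).toAdd = 2 ^ k := by
  have hsq := (Pi.multiplicative_pow_eq_one_iff 2 x).1 hx.1 j
  push_cast at hsq
  refine (ZMod.eq_zero_or_eq_two_pow_of_two_mul_eq_zero hj hsq).resolve_left fun h0 => ?_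
  refine hx.2.2 ((Pi.multiplicative_exists_pow_eq_iff _ x).2 fun j' => ?_)
  push_cast
  by_cases hj' : e j' = k + 1
  · obtain rfl : j' = j := hsub hj' hj
    simp [h0]
  · exact two_pow_succ_dvd_toAdd_of_mem_twoTorsionLayer hx hj'

theorem exists_pow_eq_div_of_mem_twoTorsionLayer (hsub : {j | e j = k + 1}.Subsingleton)
    {x x' : ∀ j, Multiplicative (ZMod (2 ^ e j))} (hx : x ∈ twoTorsionLayer _ k)
    (hx' : x' ∈ twoTorsionLayer _ k) : ∃ y, y ^ 2 ^ (k + 1) = x / x' := by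
  refine (Pi.multiplicative_exists_pow_eq_iff _ _).2 fun j => ?_
  push_cast
  rw [Pi.div_apply, toAdd_div]
  by_cases hj : e j = k + 1
  · rw [toAdd_eq_two_pow_of_mem_twoTorsionLayer hsub hx hj,
      toAdd_eq_two_pow_of_mem_twoTorsionLayer hsub hx' hj, sub_self]
    exact dvd_zero _
  · exact dvd_sub (two_pow_succ_dvd_toAdd_of_mem_twoTorsionLayer hx hj)
      (two_pow_succ_dvd_toAdd_of_mem_twoTorsionLayer hx' hj)

theorem mulSingle_mem_twoTorsionLayer [DecidableEq ι] {j₀ : ι} (hj₀ : e j₀ = k + 1) :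
    Pi.mulSingle j₀ (.ofAdd (2 ^ k)) ∈
      twoTorsionLayer (∀ j, Multiplicative (ZMod (2 ^ e j))) k := by
  refine ⟨?_, ⟨Pi.mulSingle j₀ (.ofAdd 1), ?_⟩, fun h => ?_⟩
  · rw [← Pi.mulSingle_pow, ← ofAdd_nsmul, nsmul_eq_mul, Nat.cast_ofNat, ← pow_succ',
      ZMod.two_pow_eq_zero_iff.2 hj₀.le, ofAdd_zero, Pi.mulSingle_one]
  · rw [← Pi.mulSingle_pow, ← ofAdd_nsmul, nsmul_eq_mul, mul_one, Nat.cast_pow, Nat.cast_ofNat]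
  · have hdvd := (Pi.multiplicative_exists_pow_eq_iff _ _).1 h j₀
    push_cast at hdvd
    rw [Pi.mulSingle_eq_same, toAdd_ofAdd, ZMod.two_pow_eq_zero_iff.2 hj₀.le, zero_dvd_iff,
      ZMod.two_pow_eq_zero_iff] at hdvd
    omega

end CyclicTwoGroupProduct

theorem stmt13_general (P H : Type) [CommGroup P] [CommGroup H] [Fintype H]
    (hH : Odd (Nat.card H))
    (φ : H →* MulAut P)
    (hfix : ∀ x : P, (∀ h : H, φ h x = x) → x = 1)
    (m : ℕ) (e : Fin m → ℕ)
    (hiso : Nonempty (P ≃* ((j : Fin m) → Multiplicative (ZMod (2 ^ e j)))))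
    (i : ℕ) (hi : 1 ≤ i) :
    (Finset.univ.filter fun j => e j = i).card ≠ 1 := by
  intro hcard
  obtain ⟨σ⟩ := hiso
  obtain ⟨k, rfl⟩ := Nat.exists_eq_add_of_le' hi
  obtain ⟨j₀, hj₀⟩ := Finset.card_eq_one.1 hcard
  have hj₀ : ∀ j, e j = k + 1 ↔ j = j₀ := by simpa [Finset.ext_iff] using hj₀
  have hsub : {j | e j = k + 1}.Subsingleton := fun a ha b hb =>
    ((hj₀ a).1 ha).trans ((hj₀ b).1 hb).symm
  set x := σ.symm (Pi.mulSingle j₀ (.ofAdd (2 ^ k)))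
  have hx : x ∈ twoTorsionLayer P k := by
    rw [← σ.apply_mem_twoTorsionLayer_iff, σ.apply_symm_apply]
    exact mulSingle_mem_twoTorsionLayer ((hj₀ j₀).2 rfl)
  have hdiv : ∀ h, φ h x / x ∈ (powMonoidHom (2 ^ (k + 1))).range := by
    intro h
    have hφx : σ (φ h x) ∈ twoTorsionLayer _ k :=
      ((φ h).trans σ).apply_mem_twoTorsionLayer_iff.2 hx
    refine (σ.exists_pow_eq_apply_iff _ _).1 ?_
    rw [map_div]
    exact exists_pow_eq_div_of_mem_twoTorsionLayer hsub hφx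
      (σ.apply_mem_twoTorsionLayer_iff.2 hx)
  have hcardH := pow_card_mem_of_forall_apply_div_mem φ hfix _ hdiv
  rw [pow_eq_pow_mod _ hx.1, ← Nat.card_eq_fintype_card, Nat.odd_iff.1 hH, pow_one] at hcardH
  exact hx.2.2 hcardH

/-- Let `P` be a finite abelian `2`-group and `H` a finite abelian group of odd order
acting on `P` with `C_P(H) = 1`. Write `P` in its homocyclic (elementary divisor)
decomposition `P ≅ ∏_j ℤ/2^{e j}ℤ` (so that the multiplicity `t_i` of `ℤ/2^iℤ` is the
number of indices `j` with `e j = i`). Then `t_i ≠ 1` for every `i ≥ 1`. -/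
theorem stmt13 (P H : Type) [CommGroup P] [CommGroup H] [Fintype P] [Fintype H]
    (hP : IsPGroup 2 P) (hH : Odd (Nat.card H))
    (φ : H →* MulAut P)
    (hfix : ∀ x : P, (∀ h : H, φ h x = x) → x = 1)
    (m : ℕ) (e : Fin m → ℕ) (he : ∀ j, 1 ≤ e j)
    (hiso : Nonempty (P ≃* ((j : Fin m) → Multiplicative (ZMod (2 ^ e j)))))
    (i : ℕ) (hi : 1 ≤ i) :
    (Finset.univ.filter fun j => e j = i).card ≠ 1 :=
  stmt13_general P H hH φ hfix m e hiso i hi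
end

section
/- Let k be an algebraically closed field of characteristic p > 0, P a finite abelian p-group, H a finite p'-group acting on P, and G := P ⋊ H. Then kG is brick-finite if and only if k(⁅P,H⁆ ⋊ H) is brick-finite, where H acts on the H-invariant subgroup ⁅P,H⁆ by restriction. (This is the brick-finiteness consequence of the poset isomorphism sτ-tilt kG ≅ sτ-tilt k(⁅P,H⁆ ⋊ H) of support τ-tilting modules.) -/
/-- Brick-finiteness of a `k`-algebra `A`: only finitely many finite-dimensional
`A`-modules with endomorphism ring `k`, up to isomorphism. -/
def IsBrickFinite (k A : Type) [Field k] [Ring A] [Algebra k A] : Prop :=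
  ∃ (ι : Type) (_ : Finite ι) (rep : ι → ModuleCat.{0} A),
    ∀ M : ModuleCat.{0} A, Module.Finite A M →
      Nonempty (Module.End A M ≃+* k) → ∃ i : ι, Nonempty (M ≃ₗ[A] rep i)

section Transfer

variable {A B M N : Type} [Ring A] [Ring B]

def Restr (_θ : A →+* B) (M : Type) : Type := M

instance {θ : A →+* B} [AddCommGroup M] : AddCommGroup (Restr θ M) := ‹AddCommGroup M›
instance {θ : A →+* B} [AddCommGroup M] [Module B M] : Module A (Restr θ M) :=
  Module.compHom M θ

def toRestr (θ : A →+* B) : M ≃ Restr θ M := Equiv.refl M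

lemma restr_smul (θ : A →+* B) [AddCommGroup M] [Module B M] (a : A) (m : M) :
    a • (toRestr θ m) = toRestr θ (θ a • m) := rfl

lemma restr_finite (θ : A →+* B) (hθ : Function.Surjective θ)
    [AddCommGroup M] [Module B M] [Module.Finite B M] : Module.Finite A (Restr θ M) := by
  obtain ⟨S, hS⟩ := Module.Finite.fg_top (R := B) (M := M)
  constructor
  rw [Submodule.fg_def]
  refine ⟨toRestr θ '' ↑S, (S.finite_toSet.image _), le_antisymm le_top ?_⟩
  rintro m -
  have hm : ((toRestr θ).symm m : M) ∈ Submodule.span B (S : Set M) := by rw [hS]; trivial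
  have key : ∀ x ∈ Submodule.span B (S : Set M),
      toRestr θ x ∈ Submodule.span A (toRestr θ '' ↑S) := by
    intro x hx
    refine Submodule.span_induction ?_ ?_ ?_ ?_ hx
    · exact fun y hy => Submodule.subset_span ⟨y, hy, rfl⟩
    · exact Submodule.zero_mem _
    · exact fun y z _ _ hy hz => Submodule.add_mem _ hy hz
    · intro b y _ hy
      obtain ⟨a, rfl⟩ := hθ b
      exact Submodule.smul_mem _ a hy
  exact key _ hm

def restrEndEquiv (θ : A →+* B) (hθ : Function.Surjective θ)
    [AddCommGroup M] [Module B M] :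
    Module.End A (Restr θ M) ≃+* Module.End B M where
  toFun f :=
    { toFun := fun m => f (toRestr θ m)
      map_add' := fun x y => f.map_add _ _
      map_smul' := by
        intro b m
        obtain ⟨a, rfl⟩ := hθ b
        exact f.map_smul a (toRestr θ m) }
  invFun g :=
    { toFun := fun m => toRestr θ (g ((toRestr θ).symm m))
      map_add' := fun x y => congrArg (toRestr θ) (g.map_add _ _)
      map_smul' := fun a m => congrArg (toRestr θ) (g.map_smul (θ a) _) }
  left_inv f := rfl
  right_inv g := rfl
  map_mul' f g := rfl
  map_add' f g := rfl

def restrLinearEquiv (θ : A →+* B) (hθ : Function.Surjective θ)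
    [AddCommGroup M] [Module B M] [AddCommGroup N] [Module B N]
    (e : Restr θ M ≃ₗ[A] Restr θ N) : M ≃ₗ[B] N where
  toFun m := (toRestr θ).symm (e (toRestr θ m))
  invFun n := (toRestr θ).symm (e.symm (toRestr θ n))
  left_inv m := e.left_inv _
  right_inv n := e.right_inv _
  map_add' x y := congrArg (toRestr θ).symm (e.map_add _ _)
  map_smul' b m := by
    obtain ⟨a, rfl⟩ := hθ b
    exact congrArg (toRestr θ).symm (e.map_smul a _)

variable (k : Type) [Field k] [Algebra k A] [Algebra k B]

lemma isBrickFinite_of_surjective (θ : A →+* B) (hθ : Function.Surjective θ)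
    (hA : IsBrickFinite k A) : IsBrickFinite k B := by
  classical
  obtain ⟨ι, hι, rep, hrep⟩ := hA
  refine ⟨ι, hι, fun i =>
    if h : ∃ N : ModuleCat.{0} B, Module.Finite B N ∧ Nonempty (Module.End B N ≃+* k) ∧
        Nonempty ((Restr θ N) ≃ₗ[A] rep i) then h.choose else ModuleCat.of B PUnit, ?_⟩
  intro M hM hE
  haveI : Module.Finite B M := hM
  haveI : Module.Finite A (Restr θ M) := restr_finite θ hθ
  have hE' : Nonempty (Module.End A (Restr θ (M : Type)) ≃+* k) :=
    ⟨((restrEndEquiv θ hθ).trans hE.some)⟩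
  obtain ⟨i, ⟨ei⟩⟩ := hrep (ModuleCat.of A (Restr θ (M : Type)))
    (restr_finite (M := (M : Type)) θ hθ) hE'
  have hex : ∃ N : ModuleCat.{0} B, Module.Finite B N ∧ Nonempty (Module.End B N ≃+* k) ∧
      Nonempty ((Restr θ N) ≃ₗ[A] rep i) := ⟨M, hM, hE, ⟨ei⟩⟩
  refine ⟨i, ?_⟩
  beta_reduce
  rw [dif_pos hex]
  obtain ⟨hfin, hend, ⟨eN⟩⟩ := hex.choose_spec
  exact ⟨restrLinearEquiv θ hθ (ei.trans eN.symm)⟩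

lemma isBrickFinite_of_section (θ : A →+* B) (σ : B →+* A) (hsec : ∀ b, θ (σ b) = b)
    (hact : ∀ (M : Type) [AddCommGroup M] [Module A M], Module.Finite A M →
      Nonempty (Module.End A M ≃+* k) → ∀ (a : A) (m : M), a • m = σ (θ a) • m)
    (hB : IsBrickFinite k B) : IsBrickFinite k A := by
  obtain ⟨ι, hι, rep, hrep⟩ := hB
  refine ⟨ι, hι, fun i => ModuleCat.of A (Restr θ (rep i : Type)), ?_⟩
  intro M hM hE
  have hact' : ∀ (a : A) (m : M), a • m = σ (θ a) • m := hact M hM hE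
  -- M as a B-module via σ is a brick
  haveI : Module.Finite A (M : Type) := hM
  -- finiteness of Restr σ M over B
  haveI hfinB : Module.Finite B (Restr σ (M : Type)) := by
    obtain ⟨S, hS⟩ := Module.Finite.fg_top (R := A) (M := M)
    constructor
    rw [Submodule.fg_def]
    refine ⟨toRestr σ '' ↑S, (S.finite_toSet.image _), le_antisymm le_top ?_⟩
    rintro m -
    have hm : ((toRestr σ).symm m : M) ∈ Submodule.span A (S : Set M) := by rw [hS]; trivial
    have key : ∀ x ∈ Submodule.span A (S : Set (M : Type)),
        toRestr σ x ∈ Submodule.span B (toRestr σ '' ↑S) := by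
      intro x hx
      refine Submodule.span_induction ?_ ?_ ?_ ?_ hx
      · exact fun y hy => Submodule.subset_span ⟨y, hy, rfl⟩
      · exact Submodule.zero_mem _
      · exact fun y z _ _ hy hz => Submodule.add_mem _ hy hz
      · intro a y _ hy
        have : a • y = σ (θ a) • y := hact' a y
        have h2 : toRestr σ (a • y) = (θ a) • (toRestr σ y) := by
          rw [this]; rfl
        rw [h2]
        exact Submodule.smul_mem _ _ hy
    exact key _ hm
  -- End equivalence
  have hendB : Module.End B (Restr σ (M : Type)) ≃+* Module.End A (M : Type) :=
    { toFun := fun f =>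
        { toFun := fun m => (toRestr σ).symm (f (toRestr σ m))
          map_add' := fun x y => f.map_add _ _
          map_smul' := by
            intro a m
            have h1 : toRestr σ (a • m) = (θ a) • (toRestr σ m) := by
              rw [hact' a m]; rfl
            have h2 : f ((θ a) • toRestr σ m) = (θ a) • f (toRestr σ m) :=
              f.map_smul (θ a) _
            have h3 : (θ a) • f (toRestr σ m)
                = toRestr σ (a • ((toRestr σ).symm (f (toRestr σ m)))) := by
              rw [hact' a]; rfl
            simp only [RingHom.id_apply]
            rw [h1, h2, h3]
            rfl }
      invFun := fun g =>
        { toFun := fun m => toRestr σ (g ((toRestr σ).symm m))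
          map_add' := fun x y => g.map_add _ _
          map_smul' := fun b m => congrArg (toRestr σ) (g.map_smul (σ b) _) }
      left_inv := fun f => rfl
      right_inv := fun g => rfl
      map_mul' := fun f g => rfl
      map_add' := fun f g => rfl }
  obtain ⟨i, ⟨ei⟩⟩ := hrep (ModuleCat.of B (Restr σ (M : Type))) hfinB
    ⟨hendB.trans hE.some⟩
  -- now build M ≃ₗ[A] Restr θ (rep i)
  refine ⟨i, ⟨?_⟩⟩
  exact
    { toFun := fun m => toRestr θ (ei (toRestr σ m))
      invFun := fun n => (toRestr σ).symm (ei.symm ((toRestr θ).symm n))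
      left_inv := fun m => ei.left_inv _
      right_inv := fun n => ei.right_inv _
      map_add' := fun x y => congrArg (toRestr θ) (ei.map_add _ _)
      map_smul' := by
        intro a m
        have h1 : toRestr σ (a • m) = (θ a) • (toRestr σ m) := by
          rw [hact' a m]; rfl
        show toRestr θ (ei (toRestr σ (a • m))) = toRestr θ ((θ a) • ei (toRestr σ m))
        exact congrArg (toRestr θ) ((congrArg ei h1).trans (ei.map_smul (θ a) _)) }

end Transfer


section GroupPart

variable {P H : Type} [CommGroup P] [Group H] [Fintype H] (φ : H →* MulAut P)

/-- The "norm" map `x ↦ ∏ h, φ h x`. -/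
def Nmap : P →* P where
  toFun x := ∏ h : H, φ h x
  map_one' := by simp
  map_mul' x y := by simp [Finset.prod_mul_distrib]

lemma Nmap_comp (h : H) (x : P) : Nmap φ (φ h x) = Nmap φ x := by
  show ∏ h' : H, φ h' (φ h x) = ∏ h' : H, φ h' x
  rw [← Equiv.prod_comp (Equiv.mulRight h) (fun h' => φ h' x)]
  refine Finset.prod_congr rfl fun h' _ => ?_
  show φ h' (φ h x) = φ (h' * h) x
  rw [map_mul]; rfl

lemma Nmap_fixed (h : H) (x : P) : φ h (Nmap φ x) = Nmap φ x := by
  show φ h (∏ h' : H, φ h' x) = ∏ h' : H, φ h' x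
  rw [map_prod]
  rw [← Equiv.prod_comp (Equiv.mulLeft h) (fun h' => φ h' x)]
  refine Finset.prod_congr rfl fun h' _ => ?_
  show φ h (φ h' x) = φ (h * h') x
  rw [map_mul]; rfl

/-- Projection onto the commutator part. -/
def rhoFun (e : ℕ) (x : P) : P := x ^ (Fintype.card H * e) * ((Nmap φ x)⁻¹) ^ e

lemma rhoFun_eq_prod (e : ℕ) (x : P) :
    rhoFun φ e x = ∏ h : H, (x * (φ h x)⁻¹) ^ e := by
  rw [Finset.prod_pow, Finset.prod_mul_distrib, Finset.prod_const, Finset.prod_inv_distrib,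
    rhoFun, Finset.card_univ, mul_pow, ← pow_mul]
  rfl

lemma rhoFun_mul (e : ℕ) (x y : P) :
    rhoFun φ e (x * y) = rhoFun φ e x * rhoFun φ e y := by
  simp only [rhoFun, map_mul, mul_inv, mul_pow]
  exact mul_mul_mul_comm _ _ _ _

lemma rhoFun_equivariant (e : ℕ) (h : H) (x : P) :
    rhoFun φ e (φ h x) = φ h (rhoFun φ e x) := by
  simp only [rhoFun, map_mul, map_pow, map_inv, Nmap_comp, Nmap_fixed]

end GroupPart

section Coprime

variable {P H : Type} [CommGroup P] [Group H] [Fintype P] [Fintype H]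

lemma exists_pow_eq (p : ℕ) [Fact p.Prime] (hP : IsPGroup p P) (hH : (Nat.card H).Coprime p) :
    ∃ e, ∀ x : P, x ^ (Fintype.card H * e) = x := by
  obtain ⟨m, hm⟩ := IsPGroup.iff_card.mp hP
  have hcop : (Fintype.card H).Coprime (Fintype.card P) := by
    rw [← Nat.card_eq_fintype_card (α := H), ← Nat.card_eq_fintype_card (α := P), hm]
    exact hH.pow_right m
  have hc : 0 < Fintype.card P := Fintype.card_pos
  have ht : 0 < Nat.totient (Fintype.card P) := Nat.totient_pos.mpr hc
  refine ⟨Fintype.card H ^ (Nat.totient (Fintype.card P) - 1), fun x => ?_⟩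
  have heq : Fintype.card H * Fintype.card H ^ (Nat.totient (Fintype.card P) - 1)
      = Fintype.card H ^ Nat.totient (Fintype.card P) := by
    conv_rhs => rw [← Nat.succ_pred_eq_of_pos ht]
    rw [pow_succ']
    rfl
  rw [heq]
  have hmod : Fintype.card H ^ Nat.totient (Fintype.card P) ≡ 1 [MOD Fintype.card P] :=
    Nat.ModEq.pow_totient hcop
  have hmod' : Fintype.card H ^ Nat.totient (Fintype.card P) ≡ 1 [MOD orderOf x] :=
    hmod.of_dvd (orderOf_dvd_card)
  calc x ^ (Fintype.card H ^ Nat.totient (Fintype.card P)) = x ^ 1 :=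
        pow_eq_pow_iff_modEq.mpr hmod'
    _ = x := pow_one x

end Coprime

section SDP

variable {P H : Type} [CommGroup P] [Group H] [Fintype H] {φ : H →* MulAut P}
  {R : Subgroup P} {ψ : H →* MulAut R}

lemma Nmap_R (hR : R = Subgroup.closure {y : P | ∃ (x : P) (h : H), y = x * (φ h x)⁻¹}) :
    ∀ r ∈ R, Nmap φ r = 1 := by
  intro r hr
  rw [hR] at hr
  have hle : Subgroup.closure {y : P | ∃ (x : P) (h : H), y = x * (φ h x)⁻¹} ≤ (Nmap φ).ker := by
    rw [Subgroup.closure_le]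
    rintro y ⟨x, h, rfl⟩
    simp only [SetLike.mem_coe, MonoidHom.mem_ker, map_mul, map_inv, Nmap_comp]
    exact mul_inv_cancel _
  exact hle hr

lemma rhoFun_mem (hR : R = Subgroup.closure {y : P | ∃ (x : P) (h : H), y = x * (φ h x)⁻¹})
    (e : ℕ) (x : P) : rhoFun φ e x ∈ R := by
  rw [hR, rhoFun_eq_prod]
  exact Subgroup.prod_mem _ fun h _ =>
    Subgroup.pow_mem _ (Subgroup.subset_closure
      (show (x * (φ h x)⁻¹) ∈ {y : P | ∃ (x : P) (h : H), y = x * (φ h x)⁻¹} from ⟨x, h, rfl⟩)) e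

lemma rhoFun_fix (hR : R = Subgroup.closure {y : P | ∃ (x : P) (h : H), y = x * (φ h x)⁻¹})
    {e : ℕ} (hpow : ∀ x : P, x ^ (Fintype.card H * e) = x)
    (r : P) (hr : r ∈ R) : rhoFun φ e r = r := by
  rw [rhoFun, Nmap_R hR r hr]
  simp [hpow r]

variable (hψ : ∀ (h : H) (x : R), ((ψ h x : R) : P) = φ h (x : P))
variable (hR : R = Subgroup.closure {y : P | ∃ (x : P) (h : H), y = x * (φ h x)⁻¹})

/-- The retraction `P ⋊ H →* R ⋊ H`. -/
def thetaG (hR : R = Subgroup.closure {y : P | ∃ (x : P) (h : H), y = x * (φ h x)⁻¹})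
    (hψ : ∀ (h : H) (x : R), ((ψ h x : R) : P) = φ h (x : P)) (e : ℕ) :
    (P ⋊[φ] H) →* (R ⋊[ψ] H) where
  toFun g := ⟨⟨rhoFun φ e g.left, rhoFun_mem hR e g.left⟩, g.right⟩
  map_one' := by
    ext
    · show rhoFun φ e 1 = ((1 : R) : P)
      simp [rhoFun]
    · rfl
  map_mul' a b := by
    ext
    · simp only [SemidirectProduct.mul_left, MulMemClass.coe_mul, hψ, rhoFun_mul,
        rhoFun_equivariant]
    · rfl

/-- The section `R ⋊ H →* P ⋊ H`. -/
def iotaG (hψ : ∀ (h : H) (x : R), ((ψ h x : R) : P) = φ h (x : P)) :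
    (R ⋊[ψ] H) →* (P ⋊[φ] H) where
  toFun g := ⟨(g.left : P), g.right⟩
  map_one' := by ext <;> rfl
  map_mul' a b := by
    ext
    · show ((a.left * ψ a.right b.left : R) : P) = (a.left : P) * φ a.right (b.left : P)
      rw [Subgroup.coe_mul, hψ]
    · rfl

lemma thetaG_iotaG {e : ℕ} (hpow : ∀ x : P, x ^ (Fintype.card H * e) = x)
    (g : R ⋊[ψ] H) : thetaG hR hψ e (iotaG hψ g) = g := by
  ext
  · exact rhoFun_fix hR hpow (g.left : P) g.left.2
  · rfl

lemma decompG {e : ℕ} (hpow : ∀ x : P, x ^ (Fintype.card H * e) = x)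
    (g : P ⋊[φ] H) :
    g = SemidirectProduct.inl ((Nmap φ g.left) ^ e) * iotaG hψ (thetaG hR hψ e g) := by
  ext
  · show g.left = (Nmap φ g.left) ^ e * φ 1 (rhoFun φ e g.left)
    rw [map_one, MulAut.one_apply, rhoFun, hpow g.left, inv_pow, mul_comm g.left,
      ← mul_assoc, mul_inv_cancel, one_mul]
  · show g.right = 1 * g.right
    rw [one_mul]

lemma centralG (c : P) (hc : ∀ h : H, φ h c = c) (g : P ⋊[φ] H) :
    SemidirectProduct.inl c * g = g * SemidirectProduct.inl c := by
  ext
  · show c * φ 1 g.left = g.left * φ g.right c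
    rw [map_one, MulAut.one_apply, hc, mul_comm]
  · show 1 * g.right = g.right * 1
    rw [one_mul, mul_one]

lemma fixedG (e : ℕ) (x : P) (h : H) : φ h ((Nmap φ x) ^ e) = (Nmap φ x) ^ e := by
  rw [map_pow, Nmap_fixed]

end SDP


section AlgebraPart

variable {k : Type} [Field k] {G : Type} [Group G]

lemma single_central_commute (c : G) (hc : ∀ g, c * g = g * c) (x : MonoidAlgebra k G) :
    MonoidAlgebra.single c (1 : k) * x = x * MonoidAlgebra.single c (1 : k) := by
  induction x using MonoidAlgebra.induction_linear with
  | zero => simp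
  | add f g hf hg => rw [mul_add, add_mul, hf, hg]
  | single g r =>
    rw [MonoidAlgebra.single_mul_single, MonoidAlgebra.single_mul_single, hc, one_mul, mul_one]

lemma central_unipotent_acts_id (p : ℕ) [Fact p.Prime] (hchar : CharP k p)
    {M : Type} [AddCommGroup M] [Module (MonoidAlgebra k G) M]
    (E : Module.End (MonoidAlgebra k G) M ≃+* k)
    (c : G) (hc : ∀ g, c * g = g * c) {n : ℕ} (hord : c ^ (p ^ n) = 1) (m : M) :
    (MonoidAlgebra.single c (1 : k)) • m = m := by
  haveI := hchar
  set A := MonoidAlgebra k G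
  set s : A := MonoidAlgebra.single c (1 : k) with hs
  have hscomm : ∀ x : A, s * x = x * s := single_central_commute c hc
  let f : Module.End A M :=
    { toFun := fun m => s • m
      map_add' := fun x y => smul_add s x y
      map_smul' := by
        intro a m
        simp only [RingHom.id_apply]
        rw [← mul_smul, hscomm a, mul_smul] }
  have hfpow : ∀ (j : ℕ) (m : M), (f ^ j) m = (s ^ j) • m := by
    intro j
    induction j with
    | zero => intro m; simp
    | succ j ih =>
      intro m
      rw [pow_succ, Module.End.mul_apply, ih (f m), pow_succ, mul_smul]
      rfl
  have hspow : s ^ (p ^ n) = 1 := by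
    rw [hs, MonoidAlgebra.single_pow, hord, one_pow, ← MonoidAlgebra.one_def]
  have hfq : f ^ (p ^ n) = 1 := by
    ext m
    rw [hfpow, hspow, one_smul]
    rfl
  have hx : (E f) ^ (p ^ n) = 1 := by rw [← map_pow, hfq, map_one]
  have hx1 : E f = 1 := by
    have h0 : (E f - 1) ^ (p ^ n) = 0 := by
      rw [sub_pow_char_pow, hx, one_pow, sub_self]
    have h1 := pow_eq_zero_iff (n := p ^ n) (pow_ne_zero n (Nat.Prime.ne_zero Fact.out)) |>.mp h0
    exact sub_eq_zero.mp h1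
  have hf1 : f = 1 := by
    have := congrArg E.symm hx1
    rwa [RingEquiv.symm_apply_apply, map_one] at this
  have := congrArg (fun (g : Module.End A M) => g m) hf1
  exact this

lemma act_factors (p : ℕ) [Fact p.Prime] (hchar : CharP k p) {Q : Type} [Group Q]
    (θ : G →* Q) (ι : Q →* G)
    (hdecomp : ∀ g : G, ∃ c : G, (∀ g', c * g' = g' * c) ∧ (∃ n : ℕ, c ^ (p ^ n) = 1)
      ∧ g = c * ι (θ g))
    {M : Type} [AddCommGroup M] [Module (MonoidAlgebra k G) M]
    (E : Module.End (MonoidAlgebra k G) M ≃+* k) (a : MonoidAlgebra k G) (m : M) :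
    a • m
      = ((MonoidAlgebra.mapDomainRingHom k ι) ((MonoidAlgebra.mapDomainRingHom k θ) a)) • m := by
  let F1 : MonoidAlgebra k G →+ M := (smulAddHom (MonoidAlgebra k G) M).flip m
  let F2 : MonoidAlgebra k G →+ M := F1.comp
    (((MonoidAlgebra.mapDomainRingHom k ι).comp (MonoidAlgebra.mapDomainRingHom k θ)).toAddMonoidHom)
  suffices h : F1 = F2 by exact DFunLike.congr_fun h a
  apply MonoidAlgebra.addMonoidHom_ext
  intro g r
  obtain ⟨c, hc, ⟨n, hn⟩, hg⟩ := hdecomp g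
  show (MonoidAlgebra.single g r : MonoidAlgebra k G) • m
    = ((MonoidAlgebra.mapDomainRingHom k ι)
        ((MonoidAlgebra.mapDomainRingHom k θ) (MonoidAlgebra.single g r))) • m
  have hmap : (MonoidAlgebra.mapDomainRingHom k ι)
      ((MonoidAlgebra.mapDomainRingHom k θ) (MonoidAlgebra.single g r))
      = MonoidAlgebra.single (ι (θ g)) r := by
    simp [MonoidAlgebra.mapDomainRingHom, Finsupp.mapDomain.addMonoidHom_apply,
      Finsupp.mapDomain_single, MonoidAlgebra.mapDomain_single]
  rw [hmap]
  have hsplit : (MonoidAlgebra.single g r : MonoidAlgebra k G)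
      = MonoidAlgebra.single c (1 : k) * MonoidAlgebra.single (ι (θ g)) r := by
    rw [MonoidAlgebra.single_mul_single, one_mul, ← hg]
  rw [hsplit, mul_smul, central_unipotent_acts_id p hchar E c hc hn]

end AlgebraPart


/-- Let `k` be an algebraically closed field of characteristic `p > 0`, `P` a finite
abelian `p`-group, `H` a finite `p'`-group acting on `P` via `φ`, and `G := P ⋊ H`.
Let `R ≤ P` be the subgroup corresponding to `⁅P, H⁆` (generated by the elements
`x * (φ h x)⁻¹`, which correspond to the commutators `[x, h]` in `G`), and let
`ψ : H →* MulAut R` be the restriction of the action `φ` to the `H`-invariant subgroup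
`R`. Then `kG` is brick-finite iff `k(R ⋊ H)` is brick-finite (this is the
brick-finiteness consequence of the poset isomorphism
`sτ-tilt kG ≅ sτ-tilt k(⁅P,H⁆ ⋊ H)`). -/
theorem stmt14 (k : Type) [Field k] [IsAlgClosed k] (p : ℕ) [Fact p.Prime] (hchar : CharP k p)
    (P H : Type) [CommGroup P] [Group H] [Fintype P] [Fintype H]
    (hP : IsPGroup p P) (hH : (Nat.card H).Coprime p)
    (φ : H →* MulAut P)
    (R : Subgroup P)
    (hR : R = Subgroup.closure {y : P | ∃ (x : P) (h : H), y = x * (φ h x)⁻¹})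
    (ψ : H →* MulAut R)
    (hψ : ∀ (h : H) (x : R), ((ψ h x : R) : P) = φ h (x : P)) :
    IsBrickFinite k (MonoidAlgebra k (P ⋊[φ] H)) ↔
      IsBrickFinite k (MonoidAlgebra k (R ⋊[ψ] H)) := by
  classical
  obtain ⟨e, hpow⟩ := exists_pow_eq p hP hH
  let θ : (P ⋊[φ] H) →* (R ⋊[ψ] H) := thetaG hR hψ e
  let ι : (R ⋊[ψ] H) →* (P ⋊[φ] H) := iotaG hψ
  let θhat : MonoidAlgebra k (P ⋊[φ] H) →+* MonoidAlgebra k (R ⋊[ψ] H) :=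
    MonoidAlgebra.mapDomainRingHom k θ
  let σhat : MonoidAlgebra k (R ⋊[ψ] H) →+* MonoidAlgebra k (P ⋊[φ] H) :=
    MonoidAlgebra.mapDomainRingHom k ι
  have hsec : ∀ b, θhat (σhat b) = b := by
    intro b
    show MonoidAlgebra.mapDomain θ (MonoidAlgebra.mapDomain ι b) = b
    apply MonoidAlgebra.coeff_injective
    show Finsupp.mapDomain θ (Finsupp.mapDomain ι b.coeff) = b.coeff
    rw [← Finsupp.mapDomain_comp]
    have hcomp : ((θ : (P ⋊[φ] H) → (R ⋊[ψ] H)) ∘ (ι : (R ⋊[ψ] H) → (P ⋊[φ] H))) = id :=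
      funext fun g => thetaG_iotaG hψ hR hpow g
    rw [hcomp, Finsupp.mapDomain_id]
  have hsurj : Function.Surjective θhat := fun b => ⟨σhat b, hsec b⟩
  have hdecomp : ∀ g : P ⋊[φ] H, ∃ c, (∀ g', c * g' = g' * c) ∧ (∃ n, c ^ (p ^ n) = 1)
      ∧ g = c * ι (θ g) := by
    intro g
    refine ⟨SemidirectProduct.inl ((Nmap φ g.left) ^ e),
      fun g' => centralG _ (fun h => fixedG e g.left h) g', ?_, decompG hψ hR hpow g⟩
    obtain ⟨n, hn⟩ := hP ((Nmap φ g.left) ^ e)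
    exact ⟨n, by rw [← map_pow, hn, map_one]⟩
  have hact : ∀ (M : Type) [AddCommGroup M] [Module (MonoidAlgebra k (P ⋊[φ] H)) M],
      Module.Finite (MonoidAlgebra k (P ⋊[φ] H)) M →
      Nonempty (Module.End (MonoidAlgebra k (P ⋊[φ] H)) M ≃+* k) →
      ∀ (a : MonoidAlgebra k (P ⋊[φ] H)) (m : M), a • m = σhat (θhat a) • m := by
    intro M _ _ _ hE a m
    exact act_factors p hchar θ ι hdecomp hE.some a m
  constructor
  · exact fun hA => isBrickFinite_of_surjective k θhat hsurj hA
  · exact fun hB => isBrickFinite_of_section k θhat σhat hsec hact hB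
end
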